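/- arXiv:math/9703218 — 9 statements merged into one kernel-verified Lean document; each statement's English description precedes it below -/
import Mathlib

section
/- Suppose D is an ultrafilter on a cardinal κ, B_i (i < κ) are Boolean algebras, and for each i, λ_i is a cardinal such that B_i contains an independent family of size λ_i. Then the ultraproduct B = ∏_{i<κ} B_i / D contains an independent family of size |∏_{i<κ} λ_i / D|. -/
open Cardinal

/-- The almost-everywhere-equality setoid modulo an ultrafilter: the quotient
is the ultraproduct `∏_{i} T i / D`. -/
def aeSetoid {ι : Type*} (D : Ultrafilter ι) (T : ι → Type*) : Setoid (∀ i, T i) where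
  r f g := {i | f i = g i} ∈ (D : Filter ι)
  iseqv := by
    refine ⟨fun f => ?_, fun {f g} h => ?_, fun {f g h} h1 h2 => ?_⟩
    · simp
    · simpa [eq_comm] using h
    · filter_upwards [h1, h2] with i e1 e2; exact e1.trans e2

/-- A family `f : J → A` in a Boolean algebra is independent: it is injective
and every finite Boolean combination of its members (with arbitrary
complementation pattern) is nonzero. -/
def BoolIndepFam {J A : Type*} [BooleanAlgebra A] (f : J → A) : Prop :=
  Function.Injective f ∧
    ∀ s t : Finset J, Disjoint s t → (s.inf f) ⊓ (t.inf fun j => (f j)ᶜ) ≠ ⊥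

/-- If each Boolean algebra `B i` contains an independent family of size
`λ_i`, then the ultraproduct `∏_{i} B i / D` contains an independent family of
size `|∏_{i} λ_i / D|`: there is a family, indexed by the ultraproduct
`∏ λ_i / D` of the cardinals, of pairwise `D`-inequivalent elements of the
product whose finite Boolean combinations are nonzero on a `D`-large set of
coordinates. -/
theorem stmt3 {ι : Type u} (D : Ultrafilter ι) (B : ι → Type u)
    [∀ i, BooleanAlgebra (B i)] (lam : ι → Cardinal.{u})
    (h : ∀ i, ∃ x : (lam i).out → B i, BoolIndepFam x) :
    ∃ Y : Quotient (aeSetoid D fun i => (lam i).out) → (∀ i, B i),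
      (∀ q q', q ≠ q' → {i | Y q i = Y q' i} ∉ (D : Filter ι)) ∧
      (∀ s t : Finset (Quotient (aeSetoid D fun i => (lam i).out)),
        Disjoint s t →
          {i | (s.inf fun q => Y q i) ⊓ (t.inf fun q => (Y q i)ᶜ) ≠ ⊥}
            ∈ (D : Filter ι)) := by
  classical
  choose x hx using h
  refine ⟨fun q i => x i (q.out i), ?_, ?_⟩
  · intro q q' hne hmem
    apply hne
    have hmem' : {i | q.out i = q'.out i} ∈ (D : Filter ι) := by
      filter_upwards [hmem] with i hi
      exact (hx i).1 hi
    calc q = Quotient.mk _ q.out := (Quotient.out_eq q).symm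
      _ = Quotient.mk _ q'.out := Quotient.sound hmem'
      _ = q' := Quotient.out_eq q'
  · intro s t hst
    have key : ∀ᶠ i in (D : Filter ι), ∀ q ∈ s, ∀ q' ∈ t, q.out i ≠ q'.out i := by
      rw [Filter.eventually_all_finset]
      intro q hq
      rw [Filter.eventually_all_finset]
      intro q' hq'
      have hne : q ≠ q' := fun e => Finset.disjoint_left.1 hst hq (e ▸ hq')
      have : {i | q.out i = q'.out i} ∉ (D : Filter ι) := by
        intro hd
        exact hne (by
          calc q = Quotient.mk _ q.out := (Quotient.out_eq q).symm
            _ = Quotient.mk _ q'.out := Quotient.sound hd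
            _ = q' := Quotient.out_eq q')
      have := (Ultrafilter.compl_mem_iff_notMem).2 this
      filter_upwards [this] with i hi
      exact hi
    filter_upwards [key] with i hi
    set g : Quotient (aeSetoid D fun i => (lam i).out) → (lam i).out :=
      fun q => q.out i with hg
    have hs : (s.inf fun q => x i (q.out i)) = (s.image g).inf (x i) := by
      rw [Finset.inf_image]; rfl
    have ht : (t.inf fun q => (x i (q.out i))ᶜ) =
        (t.image g).inf (fun j => (x i j)ᶜ) := by
      rw [Finset.inf_image]; rfl
    rw [hs, ht]
    apply (hx i).2
    rw [Finset.disjoint_left]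
    rintro a ha ha'
    obtain ⟨q, hq, rfl⟩ := Finset.mem_image.1 ha
    obtain ⟨q', hq', he⟩ := Finset.mem_image.1 ha'
    exact hi q hq q' hq' he.symm
end

section
/- For 1 ≤ n < ω and a dense subset X of B∖{0}, the least cardinal κ such that B∖{0} can be written as a union of κ sets each with the n-intersection property equals the least cardinal κ such that X can be written as a union of κ sets each with the n-intersection property. -/
open Cardinal

/-- A subset `Y` of a Boolean algebra has the `n`-intersection property if the
meet of any `n` elements of `Y` is nonzero. -/
def NInterProp {A : Type*} [BooleanAlgebra A] (n : ℕ) (Y : Set A) : Prop :=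
  ∀ f : Fin n → A, (∀ l, f l ∈ Y) → (Finset.univ.inf f ≠ ⊥)

/-- The least cardinal `κ` such that `S` can be covered by `κ` many sets each
having the `n`-intersection property. -/
noncomputable def nCoverNum {A : Type u} [BooleanAlgebra A] (n : ℕ) (S : Set A) :
    Cardinal.{u} :=
  sInf {c | ∃ P : Set (Set A), #P = c ∧ (∀ Y ∈ P, NInterProp n Y) ∧ S ⊆ ⋃₀ P}

lemma coverSet_nonempty {A : Type u} [BooleanAlgebra A] (n : ℕ) (hn : 1 ≤ n)
    (S : Set A) (hS : S ⊆ {b | b ≠ ⊥}) :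
    {c | ∃ P : Set (Set A), #P = c ∧ (∀ Y ∈ P, NInterProp n Y) ∧ S ⊆ ⋃₀ P}.Nonempty := by
  refine ⟨#((fun x => ({x} : Set A)) '' S), (fun x => ({x} : Set A)) '' S, rfl, ?_, ?_⟩
  · rintro Y ⟨x, hx, rfl⟩ f hf
    have h0 : Finset.univ.inf f = x := by
      apply le_antisymm
      · have := Finset.inf_le (f := f) (Finset.mem_univ (⟨0, hn⟩ : Fin n))
        rwa [show f ⟨0, hn⟩ = x from hf ⟨0, hn⟩] at this
      · exact Finset.le_inf fun l _ => (hf l).ge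
    rw [h0]
    exact hS hx
  · intro x hx
    exact ⟨{x}, ⟨x, hx, rfl⟩, rfl⟩

/-- For `1 ≤ n < ω` and a dense subset `X` of `B∖{0}`, the least number of
sets with the `n`-intersection property covering `B∖{0}` equals the least
number covering `X`. -/
theorem stmt4 {A : Type u} [BooleanAlgebra A] (n : ℕ) (hn : 1 ≤ n)
    (X : Set A) (hX : X ⊆ {b | b ≠ ⊥}) (hdense : ∀ b : A, b ≠ ⊥ → ∃ x ∈ X, x ≤ b) :
    nCoverNum n {b : A | b ≠ ⊥} = nCoverNum n X := by
  apply le_antisymm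
  · apply le_csInf (coverSet_nonempty n hn X hX)
    rintro c ⟨P, rfl, hP, hcov⟩
    set g : Set A → Set A := fun Y => {b : A | b ≠ ⊥ ∧ ∃ x ∈ Y, x ≤ b} with hg
    have h1 : nCoverNum n {b : A | b ≠ ⊥} ≤ #(g '' P) := by
      apply csInf_le'
      refine ⟨g '' P, rfl, ?_, ?_⟩
      · rintro Y' ⟨Y, hY, rfl⟩ f hf
        choose xf hxfY hxf using fun l => (hf l).2
        have hne : Finset.univ.inf xf ≠ ⊥ := hP Y hY xf hxfY
        have hle : Finset.univ.inf xf ≤ Finset.univ.inf f :=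
          Finset.inf_mono_fun fun l _ => hxf l
        intro h
        exact hne (le_bot_iff.mp (h ▸ hle))
      · intro b hb
        obtain ⟨x, hxX, hxb⟩ := hdense b hb
        obtain ⟨Y, hY, hxY⟩ := hcov hxX
        exact ⟨g Y, ⟨Y, hY, rfl⟩, hb, x, hxY, hxb⟩
    exact h1.trans Cardinal.mk_image_le
  · apply le_csInf (coverSet_nonempty n hn _ (fun b hb => hb))
    rintro c ⟨P, rfl, hP, hcov⟩
    exact csInf_le' ⟨P, rfl, hP, fun x hx => hcov (hX hx)⟩
end

section
/- If B is an interval Boolean algebra (the algebra of subsets of a linear order I generated by half-open intervals [x,y)), then d_2(B) = d(B), i.e., the least number of 2-linked sets covering B∖{0} equals the least number of centered sets covering B∖{0}. -/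
open Cardinal

/-- The elements of the Boolean subalgebra generated by `S`. -/
inductive GenBA {A : Type u} [BooleanAlgebra A] (S : Set A) : A → Prop
  | base {a : A} : a ∈ S → GenBA S a
  | bot : GenBA S ⊥
  | compl {a : A} : GenBA S a → GenBA S aᶜ
  | inf {a b : A} : GenBA S a → GenBA S b → GenBA S (a ⊓ b)

/-- `Y` is 2-linked: any two of its elements have nonzero meet. -/
def TwoLinked {A : Type u} [BooleanAlgebra A] (Y : Set A) : Prop :=
  ∀ a ∈ Y, ∀ b ∈ Y, a ⊓ b ≠ ⊥

/-- `Y` is centered: any finite nonempty subset has nonzero meet. -/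
def Centered {A : Type u} [BooleanAlgebra A] (Y : Set A) : Prop :=
  ∀ s : Finset A, ↑s ⊆ Y → s.Nonempty → s.inf id ≠ ⊥

/-- The least cardinal `c` such that `S` can be covered by `c` many subsets of
`S` each satisfying `Q`. -/
noncomputable def covNum {A : Type u} [BooleanAlgebra A] (Q : Set A → Prop)
    (S : Set A) : Cardinal.{u} :=
  sInf {c | ∃ P : Set (Set A), #P = c ∧ (∀ Y ∈ P, Y ⊆ S ∧ Q Y) ∧ S ⊆ ⋃₀ P}

/-!
A centered family is 2-linked, so `d(B) ≥ d₂(B)`. Conversely, every nonzero element of `B(I)`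
contains a nonzero interval, and intervals of a linear order have Helly number 2: if finitely many
of them meet pairwise, they have a common point. So shrinking each element to an interval inside it
turns a 2-linked family into one whose upward closure is centered, and a cover by 2-linked sets
into a cover by as many centered sets.
-/

universe u v

section Covers

variable {A : Type u} [BooleanAlgebra A]

def IsCover (Q : Set A → Prop) (S : Set A) (P : Set (Set A)) : Prop :=
  (∀ Y ∈ P, Y ⊆ S ∧ Q Y) ∧ S ⊆ ⋃₀ P

theorem covNum_le_mk {Q : Set A → Prop} {S : Set A} {P : Set (Set A)} (h : IsCover Q S P) :
    covNum Q S ≤ #P :=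
  csInf_le' ⟨P, rfl, h⟩

theorem covNum_le_covNum {Q Q' : Set A → Prop} {S : Set A} (F : Set A → Set A)
    (hF : ∀ Y ⊆ S, Q' Y → F Y ⊆ S ∧ Q (F Y))
    (hcov : ∀ a ∈ S, ∃ b ∈ S, ∀ Y, b ∈ Y → a ∈ F Y)
    (hne : ∃ P, IsCover Q' S P) :
    covNum Q S ≤ covNum Q' S := by
  obtain ⟨P₀, hP₀⟩ := hne
  refine le_csInf ⟨_, P₀, rfl, hP₀⟩ ?_
  rintro _ ⟨P, rfl, hPQ, hPS⟩
  refine (covNum_le_mk (P := F '' P) ⟨?_, ?_⟩).trans mk_image_le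
  · rintro _ ⟨Y, hY, rfl⟩
    exact hF Y (hPQ Y hY).1 (hPQ Y hY).2
  · intro a ha
    obtain ⟨b, hb, hbF⟩ := hcov a ha
    obtain ⟨Y, hY, hbY⟩ := hPS hb
    exact ⟨F Y, ⟨Y, hY, rfl⟩, hbF Y hbY⟩

theorem TwoLinked.mono {Y Y' : Set A} (h : Y ⊆ Y') (hY' : TwoLinked Y') : TwoLinked Y :=
  fun a ha b hb => hY' a (h ha) b (h hb)

theorem Centered.mono {Y Y' : Set A} (h : Y ⊆ Y') (hY' : Centered Y') : Centered Y :=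
  fun s hs hne => hY' s (hs.trans h) hne

theorem Centered.twoLinked {Y : Set A} (hY : Centered Y) : TwoLinked Y := by
  classical
  intro a ha b hb
  simpa using hY {a, b} (by simp [Set.insert_subset_iff, ha, hb]) (Finset.insert_nonempty a {b})

theorem centered_singleton {a : A} (ha : a ≠ ⊥) : Centered ({a} : Set A) := by
  intro s hs hne
  obtain rfl : s = {a} := Finset.eq_singleton_iff_nonempty_unique_mem.2 ⟨hne, fun x hx => hs hx⟩
  simpa using ha

theorem Centered.upperClosure {Y : Set A} (hY : Centered Y) :
    Centered (upperClosure Y : Set A) := by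
  classical
  intro s hs hne
  choose! f hfY hfle using fun a (ha : a ∈ s) => hs ha
  have hinf : (s.image f).inf id ≤ s.inf id := by
    rw [Finset.inf_image]
    exact Finset.inf_mono_fun hfle
  refine fun hbot => hY (s.image f) ?_ (hne.image f) (le_bot_iff.1 (hbot ▸ hinf))
  simpa [Set.subset_def] using hfY

theorem exists_isCover_centered {S : Set A} (hS : ⊥ ∉ S) : ∃ P, IsCover Centered S P := by
  refine ⟨(fun a => {a}) '' S, ?_, fun a ha => ⟨{a}, ⟨a, ha, rfl⟩, rfl⟩⟩
  rintro _ ⟨a, ha, rfl⟩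
  exact ⟨Set.singleton_subset_iff.2 ha, centered_singleton (ne_of_mem_of_not_mem ha hS)⟩

theorem covNum_twoLinked_eq_covNum_centered {S T : Set A} (hS : ⊥ ∉ S)
    (hT : ∀ Y ⊆ T, TwoLinked Y → Centered Y)
    (hdense : ∀ a ∈ S, ∃ b ∈ S ∩ T, b ≤ a) :
    covNum TwoLinked S = covNum Centered S := by
  obtain ⟨P, hP⟩ := exists_isCover_centered hS
  have hP₂ : IsCover TwoLinked S P :=
    ⟨fun Y hY => ⟨(hP.1 Y hY).1, (hP.1 Y hY).2.twoLinked⟩, hP.2⟩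
  apply le_antisymm
  · exact covNum_le_covNum id (fun Y hYS hY => ⟨hYS, hY.twoLinked⟩)
      (fun a ha => ⟨a, ha, fun _ => id⟩) ⟨P, hP⟩
  · refine covNum_le_covNum (fun Y => S ∩ upperClosure (Y ∩ T))
      (fun Y _ hY => ⟨Set.inter_subset_left, ?_⟩) ?_ ⟨P, hP₂⟩
    · have hYT : Centered (Y ∩ T) := hT _ Set.inter_subset_right (hY.mono Set.inter_subset_left)
      exact hYT.upperClosure.mono Set.inter_subset_right
    · intro a ha
      obtain ⟨b, ⟨hbS, hbT⟩, hba⟩ := hdense a ha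
      exact ⟨b, hbS, fun Y hbY => ⟨ha, b, ⟨hbY, hbT⟩, hba⟩⟩

end Covers

/-- Helly's theorem for intervals: `lo a`, the least chosen point of `a ∩ b` over `b ∈ s`, lies
in `a`, and the largest `lo k` lies in every `a` because `lo a ≤ lo k ≤ x k a` with both ends in
`a`. -/
theorem TwoLinked.centered_of_ordConnected {α : Type v} [LinearOrder α] {Y : Set (Set α)}
    (hY : ∀ a ∈ Y, a.OrdConnected) (h : TwoLinked Y) : Centered Y := by
  intro s hsY hs
  have : Nonempty α := by
    obtain ⟨a, ha⟩ := hs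
    obtain ⟨z, -⟩ := Set.nonempty_iff_ne_empty.2 (h a (hsY ha) a (hsY ha))
    exact ⟨z⟩
  choose! x hx using fun a (ha : a ∈ s) b (hb : b ∈ s) =>
    Set.nonempty_iff_ne_empty.2 (h a (hsY ha) b (hsY hb))
  let lo a := s.inf' hs (x a)
  have lo_mem : ∀ a ∈ s, lo a ∈ a := fun a ha => by
    obtain ⟨b, hb, hab⟩ := s.exists_mem_eq_inf' hs (x a)
    simpa only [lo, hab] using (hx a ha b hb).1
  obtain ⟨k, hk, hmax⟩ := s.exists_max_image lo hs
  rw [Finset.inf_id_set_eq_sInter, Set.bot_eq_empty, ← Set.nonempty_iff_ne_empty]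
  exact ⟨lo k, fun a ha => (hY a (hsY ha)).out (lo_mem a ha) (hx k hk a ha).2
    ⟨hmax a ha, s.inf'_le (x k) ha⟩⟩

namespace IntervalAlgebra

variable {I : Type u} [LinearOrder I]

def gens (I : Type u) [LinearOrder I] : Set (Set I) :=
  {s | ∃ x y : I, s = Set.Ico x y} ∪ {s | ∃ x : I, s = Set.Ici x} ∪
    {s | ∃ y : I, s = Set.Iio y}

/-- Endpoints range over `I ∪ {±∞}`, so that rays, `∅` and `univ` are intervals as well. -/
def Itv (p q : WithBot (WithTop I)) : Set I :=
  (fun z : I => ((z : WithTop I) : WithBot (WithTop I))) ⁻¹' Set.Ico p q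

@[simp] theorem coe_coe_lt_top (z : I) : ((z : WithTop I) : WithBot (WithTop I)) < ⊤ :=
  WithBot.coe_lt_coe.2 (WithTop.coe_lt_top z)

theorem ordConnected_Itv (p q : WithBot (WithTop I)) : (Itv p q).OrdConnected :=
  Set.ordConnected_Ico.preimage_mono (WithBot.coe_mono.comp WithTop.coe_mono)

theorem Itv_inter_Itv (p q p' q' : WithBot (WithTop I)) :
    Itv p q ∩ Itv p' q' = Itv (max p p') (min q q') := by
  simp only [Itv, ← Set.preimage_inter, Set.Ico_inter_Ico]

theorem compl_Itv (p q : WithBot (WithTop I)) : (Itv p q)ᶜ = Itv ⊥ p ∪ Itv q ⊤ := by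
  ext z
  simp [Itv, imp_iff_not_or]

@[simp] theorem Itv_top_left (q : WithBot (WithTop I)) : Itv ⊤ q = ∅ := by
  ext z
  simp [Itv]

@[simp] theorem Itv_bot_right (p : WithBot (WithTop I)) : Itv p ⊥ = ∅ := by
  ext z
  simp [Itv]

@[simp] theorem Itv_bot_top : Itv ⊥ ⊤ = (Set.univ : Set I) := by
  ext z
  simp [Itv]

@[simp] theorem Itv_coe_coe (x y : I) :
    Itv ((x : WithTop I) : WithBot (WithTop I)) ((y : WithTop I) : WithBot (WithTop I)) =
      Set.Ico x y := by
  ext z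
  simp [Itv]

@[simp] theorem Itv_coe_top (x : I) :
    Itv ((x : WithTop I) : WithBot (WithTop I)) ⊤ = Set.Ici x := by
  ext z
  simp [Itv]

@[simp] theorem Itv_bot_coe (y : I) :
    Itv ⊥ ((y : WithTop I) : WithBot (WithTop I)) = Set.Iio y := by
  ext z
  simp [Itv]

theorem genBA_Itv (p q : WithBot (WithTop I)) : GenBA (gens I) (Itv p q) := by
  have huniv : GenBA (gens I) Set.univ := Set.compl_empty ▸ GenBA.compl GenBA.bot
  have hleft : GenBA (gens I) (Itv p ⊤) := by
    induction p using WithBot.recBotCoe with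
    | bot => simpa using huniv
    | coe p =>
      induction p using WithTop.recTopCoe with
      | top => simpa using (GenBA.bot : GenBA (gens I) ⊥)
      | coe x =>
        simpa using GenBA.base (show Set.Ici x ∈ gens I from Or.inl (Or.inr ⟨x, rfl⟩))
  have hright : GenBA (gens I) (Itv ⊥ q) := by
    induction q using WithBot.recBotCoe with
    | bot => simpa using (GenBA.bot : GenBA (gens I) ⊥)
    | coe q =>
      induction q using WithTop.recTopCoe with
      | top => simpa using huniv
      | coe y => simpa using GenBA.base (show Set.Iio y ∈ gens I from Or.inr ⟨y, rfl⟩)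
  simpa [Itv_inter_Itv] using hleft.inf hright

inductive IsItvUnion : Set I → Prop
  | itv (p q : WithBot (WithTop I)) : IsItvUnion (Itv p q)
  | union {a b : Set I} : IsItvUnion a → IsItvUnion b → IsItvUnion (a ∪ b)

theorem IsItvUnion.inter {a b : Set I} (ha : IsItvUnion a) (hb : IsItvUnion b) :
    IsItvUnion (a ∩ b) := by
  induction ha with
  | itv p q =>
    induction hb with
    | itv p' q' => exact Itv_inter_Itv p q p' q' ▸ .itv _ _
    | union _ _ ih₁ ih₂ => exact Set.inter_union_distrib_left _ _ _ ▸ ih₁.union ih₂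
  | union _ _ ih₁ ih₂ => exact Set.union_inter_distrib_right _ _ _ ▸ ih₁.union ih₂

theorem IsItvUnion.compl {a : Set I} (ha : IsItvUnion a) : IsItvUnion aᶜ := by
  induction ha with
  | itv p q => exact compl_Itv p q ▸ (IsItvUnion.itv _ _).union (.itv _ _)
  | union _ _ ih₁ ih₂ => exact Set.compl_union _ _ ▸ ih₁.inter ih₂

theorem IsItvUnion.of_genBA {a : Set I} (ha : GenBA (gens I) a) : IsItvUnion a := by
  induction ha with
  | base hs =>
    rcases hs with (⟨x, y, rfl⟩ | ⟨x, rfl⟩) | ⟨y, rfl⟩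
    · exact Itv_coe_coe x y ▸ .itv _ _
    · exact Itv_coe_top x ▸ .itv _ _
    · exact Itv_bot_coe y ▸ .itv _ _
  | bot => simpa using IsItvUnion.itv (⊤ : WithBot (WithTop I)) ⊤
  | compl _ ih => exact ih.compl
  | inf _ _ ih₁ ih₂ => exact ih₁.inter ih₂

theorem IsItvUnion.exists_Itv_subset {a : Set I} (ha : IsItvUnion a) (hne : a.Nonempty) :
    ∃ p q, (Itv p q).Nonempty ∧ Itv p q ⊆ a := by
  induction ha with
  | itv p q => exact ⟨p, q, hne, subset_rfl⟩
  | union _ _ ih₁ ih₂ =>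
    rcases Set.union_nonempty.1 hne with h | h
    · obtain ⟨p, q, hpq, hsub⟩ := ih₁ h
      exact ⟨p, q, hpq, hsub.trans Set.subset_union_left⟩
    · obtain ⟨p, q, hpq, hsub⟩ := ih₂ h
      exact ⟨p, q, hpq, hsub.trans Set.subset_union_right⟩

end IntervalAlgebra

/-- For the interval algebra `B(I)` of a linear order `I` (the algebra of
subsets of `I` generated by the half-open intervals `[x,y)`, including the
rays `[x,∞)` and `(-∞,y)`), the least number of 2-linked sets covering
`B(I)∖{0}` equals the least number of centered sets covering `B(I)∖{0}`,
i.e. `d₂(B(I)) = d(B(I))`. -/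
theorem stmt5 {I : Type u} [LinearOrder I] :
    covNum TwoLinked
        {a : Set I | GenBA ({s | ∃ x y : I, s = Set.Ico x y} ∪
          {s | ∃ x : I, s = Set.Ici x} ∪ {s | ∃ y : I, s = Set.Iio y}) a ∧ a ≠ ⊥} =
      covNum Centered
        {a : Set I | GenBA ({s | ∃ x y : I, s = Set.Ico x y} ∪
          {s | ∃ x : I, s = Set.Ici x} ∪ {s | ∃ y : I, s = Set.Iio y}) a ∧ a ≠ ⊥} := by
  refine covNum_twoLinked_eq_covNum_centered (T := {a | a.OrdConnected}) (fun h => h.2 rfl)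
    (fun _ hY => TwoLinked.centered_of_ordConnected hY) ?_
  rintro a ⟨ha, hne⟩
  obtain ⟨p, q, hpq, hsub⟩ :=
    (IntervalAlgebra.IsItvUnion.of_genBA ha).exists_Itv_subset (Set.nonempty_iff_ne_empty.2 hne)
  exact ⟨_, ⟨⟨IntervalAlgebra.genBA_Itv p q, hpq.ne_empty⟩,
    IntervalAlgebra.ordConnected_Itv p q⟩, hsub⟩
end

section
/- Let λ be an infinite cardinal and k ≥ 1, n = 2k. Let 𝒳 = {x ∈ ^λ2 : |x⁻¹({1})| ≤ k}, Z_α = {x ∈ 𝒳 : x(α) = 1}, and let B be the algebra of subsets of 𝒳 generated by {Z_α : α < λ}. Then the sets Y_α = Z_0 △ Z_α (symmetric difference) for 0 < α < λ form an n-independent family of size λ in B: every Boolean combination ⋂_{l<n} Y_{α_l}^{t(l)} of n distinct Y_α's is nonempty. -/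
open Cardinal

/-- Let `λ` be infinite, `k ≥ 1`, `n = 2k`, let `𝒳` be the set of subsets of
`λ` of size `≤ k` (i.e. functions `x ∈ ^λ2` with `|x⁻¹(1)| ≤ k`), let
`Z_α = {x ∈ 𝒳 : x(α) = 1}` and `Y_α = Z_0 ∆ Z_α` for `α ≠ 0` (here `0` is a
fixed point `a`). Then the `Y_α` form an `n`-independent family of size `λ`:
they are pairwise distinct and every Boolean combination of `n` distinct
`Y_α`'s is nonempty. -/
theorem stmt8 {L : Type u} [Infinite L] (a : L) (k : ℕ) (hk : 1 ≤ k) :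
    Function.Injective
      (fun β : {b : L // b ≠ a} =>
        symmDiff {s : {s : Finset L // s.card ≤ k} | a ∈ s.1}
          {s : {s : Finset L // s.card ≤ k} | (β : L) ∈ s.1}) ∧
    ∀ (α : Fin (2 * k) → L), Function.Injective α → (∀ l, α l ≠ a) →
      ∀ t : Fin (2 * k) → Bool,
        (⋂ l : Fin (2 * k),
          (if t l then
            (symmDiff {s : {s : Finset L // s.card ≤ k} | a ∈ s.1}
              {s : {s : Finset L // s.card ≤ k} | α l ∈ s.1})ᶜ
          else
            symmDiff {s : {s : Finset L // s.card ≤ k} | a ∈ s.1}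
              {s : {s : Finset L // s.card ≤ k} | α l ∈ s.1})).Nonempty := by
  classical
  constructor
  · intro β γ h
    by_contra hne
    have hβγ : (γ : L) ≠ (β : L) := fun e => hne (Subtype.ext e.symm)
    have hs : ({(β : L)} : Finset L).card ≤ k := by simpa using hk
    have := Set.ext_iff.mp h ⟨{(β : L)}, hs⟩
    simp [Set.mem_symmDiff, Set.mem_setOf_eq, β.2, hβγ] at this
  · intro α hinj hne t
    set F : Finset (Fin (2 * k)) := Finset.univ.filter (fun l => t l = false) with hF
    set T : Finset (Fin (2 * k)) := Finset.univ.filter (fun l => t l = true) with hT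
    by_cases hFk : F.card ≤ k
    · have hcard : (F.image α).card ≤ k := le_trans (Finset.card_image_le) hFk
      refine ⟨⟨F.image α, hcard⟩, ?_⟩
      simp only [Set.mem_iInter]
      intro l
      have ha : a ∉ F.image α := by
        simp only [Finset.mem_image]
        rintro ⟨j, _, hj⟩; exact hne j hj
      have hmem : α l ∈ F.image α ↔ l ∈ F := by
        simp only [Finset.mem_image]
        constructor
        · rintro ⟨j, hj, hje⟩; rwa [hinj hje] at hj
        · exact fun h => ⟨l, h, rfl⟩
      by_cases ht : t l = true
      · have hlF : l ∉ F := by simp [hF, ht]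
        simp only [ht, if_true, Set.mem_compl_iff, Set.mem_symmDiff, Set.mem_setOf_eq]
        simp [ha, hmem, hlF]
      · have hlF : l ∈ F := by simp [hF]; simpa using ht
        simp [ht, Set.mem_symmDiff, Set.mem_setOf_eq, ha, hmem, hlF]
    · have hsum : T.card + F.card = 2 * k := by
        have := Finset.card_filter_add_card_filter_not
          (s := (Finset.univ : Finset (Fin (2 * k)))) (p := fun l => t l = true)
        simp only [Finset.card_univ, Fintype.card_fin] at this
        rw [hT, hF]
        convert this using 3
        ext l
        simp [Bool.not_eq_true]
      have hTk : T.card + 1 ≤ k := by omega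
      have hcard : (insert a (T.image α)).card ≤ k := by
        calc (insert a (T.image α)).card ≤ (T.image α).card + 1 :=
              Finset.card_insert_le _ _
          _ ≤ T.card + 1 := by gcongr; exact Finset.card_image_le
          _ ≤ k := hTk
      refine ⟨⟨insert a (T.image α), hcard⟩, ?_⟩
      simp only [Set.mem_iInter]
      intro l
      have ha : a ∈ insert a (T.image α) := Finset.mem_insert_self _ _
      have hmem : α l ∈ insert a (T.image α) ↔ l ∈ T := by
        simp only [Finset.mem_insert, Finset.mem_image]
        constructor
        · rintro (h | ⟨j, hj, hje⟩)
          · exact absurd h (hne l)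
          · rwa [hinj hje] at hj
        · exact fun h => Or.inr ⟨l, h, rfl⟩
      by_cases ht : t l = true
      · have hlT : l ∈ T := by simp [hT, ht]
        simp only [ht, if_true, Set.mem_compl_iff, Set.mem_symmDiff, Set.mem_setOf_eq]
        simp [ha, hmem, hlT]
      · have hlT : l ∉ T := by simp [hT, ht]
        simp [ht, Set.mem_symmDiff, Set.mem_setOf_eq, ha, hmem, hlT]
end

section
/- Let λ be infinite, k ≥ 1, n = 2k, 𝒳 = {x ∈ ^λ2 : |x⁻¹({1})| ≤ k}, and B the algebra of subsets of 𝒳 generated by Z_α = {x ∈ 𝒳 : x(α)=1}. Then B contains no uncountable (n+1)-independent family; i.e., ind_{n+1}(B) = ℵ₀. -/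
open Cardinal

/-- A set `Y` in a Boolean algebra is `m`-independent if every Boolean
combination of `m` distinct members of `Y` (with arbitrary complementation
pattern) is nonzero. -/
def NIndepSet {A : Type u} [BooleanAlgebra A] (m : ℕ) (Y : Set A) : Prop :=
  ∀ s t : Finset A, ↑s ⊆ Y → ↑t ⊆ Y → Disjoint s t → s.card + t.card = m →
    (s.inf id) ⊓ (t.inf fun b => bᶜ) ≠ ⊥

/-!
Every element of `B` depends on finitely many coordinates. Among uncountably many members of a
`(2k+1)`-independent family, a Δ-system argument on these supports and a pigeonhole on the finitely
many possible traces on the root `R` give `2k + 1` members `b` whose supports `F b` form a Δ-system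
with root `R` and which agree on all points `y ⊆ R`. A point `x` (a set of size `≤ k`) meets at
most `|x \ R|` of the disjoint sets `F b \ R`, and for every other `b` we have
`x ∈ b ↔ x ∩ R ∈ b`. Split the members into `k` and `k + 1`: the point lying in the first `k` and
outside the other `k + 1` forces `∅ ∉ b`, while the point realising the opposite pattern forces
`∅ ∈ b`.

Conversely, the singletons `{x}` with `|x| = k` are pairwise disjoint atoms of `B`; for `2ⁿ` of
them, `a T` with `T ⊆ {0, …, n-1}`, the elements `⋃_{T ∋ i} a T` form an independent family of
size `n`.
-/

open Finset Function

section GenBA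

variable {A : Type*} [BooleanAlgebra A] {S : Set A}

lemma GenBA.top : GenBA S ⊤ :=
  compl_bot (α := A) ▸ GenBA.bot.compl

lemma GenBA.sup {a b : A} (ha : GenBA S a) (hb : GenBA S b) : GenBA S (a ⊔ b) := by
  simpa using (ha.compl.inf hb.compl).compl

lemma GenBA.finset_sup {ι : Type*} {s : Finset ι} {f : ι → A} (hf : ∀ i ∈ s, GenBA S (f i)) :
    GenBA S (s.sup f) :=
  sup_induction GenBA.bot (fun _ ha _ hb => ha.sup hb) hf

lemma GenBA.finset_inf {ι : Type*} {s : Finset ι} {f : ι → A} (hf : ∀ i ∈ s, GenBA S (f i)) :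
    GenBA S (s.inf f) :=
  inf_induction GenBA.top (fun _ ha _ hb => ha.inf hb) hf

end GenBA

lemma NIndepSet.mono {A : Type*} [BooleanAlgebra A] {m : ℕ} {Y Y' : Set A} (h : NIndepSet m Y)
    (hY : Y' ⊆ Y) : NIndepSet m Y' :=
  fun s t hs ht => h s t (hs.trans hY) (ht.trans hY)

lemma NIndepSet.exists_forall_mem_forall_not_mem {X : Type*} {m : ℕ} {Y : Set (Set X)}
    (h : NIndepSet m Y) {s t : Finset (Set X)} (hs : ↑s ⊆ Y) (ht : ↑t ⊆ Y) (hst : Disjoint s t)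
    (hm : s.card + t.card = m) : ∃ x, (∀ b ∈ s, x ∈ b) ∧ ∀ b ∈ t, x ∉ b := by
  obtain ⟨x, hx⟩ := Set.nonempty_iff_ne_empty.2 (h s t hs ht hst hm)
  simp only [inf_set_eq_iInter, id, Set.inf_eq_inter, Set.mem_inter_iff, Set.mem_iInter,
    Set.mem_compl_iff] at hx
  exact ⟨x, hx⟩

section SupContaining

variable {A : Type*} [BooleanAlgebra A] {ι : Type*} [Fintype ι] [DecidableEq ι]
  {a : Finset ι → A}

def supContaining (a : Finset ι → A) (i : ι) : A :=
  ({T | i ∈ T} : Finset (Finset ι)).sup a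

lemma le_supContaining {T : Finset ι} {i : ι} (hi : i ∈ T) : a T ≤ supContaining a i :=
  le_sup (by simpa using hi)

lemma disjoint_supContaining (ha : Pairwise (Disjoint on a)) {T : Finset ι} {i : ι} (hi : i ∉ T) :
    Disjoint (a T) (supContaining a i) :=
  Finset.disjoint_sup_right.2 fun T' hT' => ha fun h => hi (by subst h; simpa using hT')

lemma supContaining_injective (ha : Pairwise (Disjoint on a)) (hne : ∀ T, a T ≠ ⊥) :
    Injective (supContaining a) := by
  intro i j hij
  by_contra hne'
  have hdisj : Disjoint (a {i}) (supContaining a j) :=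
    disjoint_supContaining ha (by simpa [eq_comm] using hne')
  exact hne {i} (hdisj.eq_bot_of_le (hij ▸ le_supContaining (mem_singleton_self i)))

/-- A Boolean combination taking the `supContaining a i` positively exactly for `i ∈ T` lies
above the atom `a T`. -/
lemma nIndepSet_range_supContaining (ha : Pairwise (Disjoint on a)) (hne : ∀ T, a T ≠ ⊥)
    (m : ℕ) : NIndepSet m (Set.range (supContaining a)) := by
  classical
  intro s t hs ht hst _
  refine ne_bot_of_le_ne_bot (hne {i | supContaining a i ∈ s})
    (le_inf (Finset.le_inf fun c hc => ?_) (Finset.le_inf fun c hc => ?_))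
  · obtain ⟨i, rfl⟩ := hs hc
    exact le_supContaining (by simpa using hc)
  · obtain ⟨j, rfl⟩ := ht hc
    refine (disjoint_supContaining ha ?_).le_compl_right
    simpa using fun hj => disjoint_left.1 hst hj hc

end SupContaining

section DeltaSystem

variable {ι α : Type*}

lemma Set.Infinite.exists_infinite_pairwiseDisjoint {s : Set ι} (hs : s.Infinite)
    {f : ι → Finset α} (hfin : ∀ a, {i ∈ s | a ∈ f i}.Finite) :
    ∃ t ⊆ s, t.Infinite ∧ t.PairwiseDisjoint f := by
  obtain ⟨t, -, ht⟩ := zorn_subset_nonempty {t | t ⊆ s ∧ t.PairwiseDisjoint f}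
    (fun c hc hchain _ => ⟨⋃₀ c, ⟨Set.sUnion_subset fun t ht => (hc ht).1,
      (Set.pairwiseDisjoint_sUnion hchain.directedOn).2 fun t ht => (hc ht).2⟩,
      fun _ => Set.subset_sUnion_of_mem⟩)
    ∅ ⟨Set.empty_subset _, Set.pairwiseDisjoint_empty⟩
  refine ⟨t, ht.prop.1, fun htfin => hs ?_, ht.prop.2⟩
  have hcover : s ⊆ t ∪ ⋃ j ∈ t, ⋃ a ∈ f j, {i ∈ s | a ∈ f i} := by
    intro i hi
    by_cases hit : i ∈ t
    · exact Or.inl hit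
    have : ¬∀ j ∈ t, Disjoint (f i) (f j) := fun h => hit
      (ht.mem_of_prop_insert ⟨Set.insert_subset hi ht.prop.1, ht.prop.2.insert_of_notMem hit h⟩)
    push Not at this
    obtain ⟨j, hj, hij⟩ := this
    obtain ⟨a, hai, haj⟩ := Finset.not_disjoint_iff.1 hij
    simp only [Set.mem_union, Set.mem_iUnion]
    exact Or.inr ⟨j, hj, a, haj, hi, hai⟩
  exact (htfin.union (htfin.biUnion fun j _ =>
    (f j).finite_toSet.biUnion fun a _ => hfin a)).subset hcover

variable [DecidableEq α]

def IsDeltaSystem (s : Set ι) (f : ι → Finset α) (R : Finset α) : Prop :=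
  s.Pairwise fun i j => f i ∩ f j = R

lemma IsDeltaSystem.mono {s t : Set ι} {f : ι → Finset α} {R : Finset α}
    (h : IsDeltaSystem s f R) (hts : t ⊆ s) : IsDeltaSystem t f R :=
  Set.Pairwise.mono hts h

lemma IsDeltaSystem.pairwiseDisjoint_sdiff {s : Set ι} {f : ι → Finset α} {R : Finset α}
    (h : IsDeltaSystem s f R) : s.PairwiseDisjoint fun i => f i \ R := by
  intro i hi j hj hij
  refine disjoint_left.2 fun a hai haj => (mem_sdiff.1 hai).2 ?_
  rw [← h hi hj hij]
  exact mem_inter.2 ⟨(mem_sdiff.1 hai).1, (mem_sdiff.1 haj).1⟩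

theorem Set.Infinite.exists_isDeltaSystem {s : Set ι} (hs : s.Infinite) {f : ι → Finset α}
    {n : ℕ} (hf : ∀ i ∈ s, (f i).card ≤ n) :
    ∃ t ⊆ s, t.Infinite ∧ ∃ R, IsDeltaSystem t f R := by
  induction n generalizing s f with
  | zero =>
    refine ⟨s, subset_rfl, hs, ∅, fun i hi j _ _ => ?_⟩
    simp [Finset.card_eq_zero.1 (Nat.le_zero.1 (hf i hi))]
  | succ n ih =>
    by_cases h : ∃ a, {i ∈ s | a ∈ f i}.Infinite
    · obtain ⟨a, ha⟩ := h
      obtain ⟨t, hts, ht, R, hR⟩ := ih ha (f := fun i => (f i).erase a) fun i hi => by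
        have := card_erase_of_mem hi.2
        have := hf i hi.1
        omega
      refine ⟨t, hts.trans (Set.sep_subset _ _), ht, insert a R, fun i hi j hj hij => ?_⟩
      rw [← hR hi hj hij, erase_inter, inter_erase, erase_idem, insert_erase]
      exact Finset.mem_inter.2 ⟨(hts hi).2, (hts hj).2⟩
    · push Not at h
      obtain ⟨t, hts, ht, hdisj⟩ := hs.exists_infinite_pairwiseDisjoint h
      exact ⟨t, hts, ht, ∅, fun i hi j hj hij =>
        Finset.disjoint_iff_inter_eq_empty.1 (hdisj hi hj hij)⟩

end DeltaSystem

lemma Set.Infinite.exists_infinite_fiber {α β : Type*} [Finite β] {s : Set α} (hs : s.Infinite)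
    (f : α → β) : ∃ y, (s ∩ f ⁻¹' {y}).Infinite := by
  by_contra! h
  exact hs ((Set.finite_iUnion h).subset fun a ha => Set.mem_iUnion.2 ⟨f a, ha, rfl⟩)

lemma Set.exists_infinite_fiber_of_not_countable {α β : Type*} [Countable β] {s : Set α}
    (hs : ¬s.Countable) (f : α → β) : ∃ y, (s ∩ f ⁻¹' {y}).Infinite := by
  by_contra! h
  have hcover : s ⊆ ⋃ y, s ∩ f ⁻¹' {y} := fun a ha => Set.mem_iUnion.2 ⟨f a, ha, rfl⟩
  exact hs ((Set.countable_iUnion fun y => (h y).countable).mono hcover)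

lemma Finset.card_le_card_of_forall_not_disjoint {ι α : Type*} {s : Finset ι} {f : ι → Finset α}
    (hs : (s : Set ι).PairwiseDisjoint f) {t : Finset α} (ht : ∀ i ∈ s, ¬Disjoint t (f i)) :
    s.card ≤ t.card := by
  classical
  calc s.card ≤ (s.biUnion fun i => t ∩ f i).card :=
        card_le_card_biUnion (hs.mono fun _ => inter_subset_right)
          fun i hi => not_disjoint_iff_nonempty_inter.1 (ht i hi)
    _ ≤ t.card := card_le_card (biUnion_subset.2 fun _ _ => inter_subset_left)

section Supports

variable {L : Type*}

def SupportedOn {p : Finset L → Prop} (F : Finset L) (b : Set {s : Finset L // p s}) : Prop :=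
  ∀ x y : {s : Finset L // p s}, (∀ β ∈ F, β ∈ x.1 ↔ β ∈ y.1) → (x ∈ b ↔ y ∈ b)

lemma GenBA.exists_supportedOn {p : Finset L → Prop} {b : Set {s : Finset L // p s}}
    (hb : GenBA (Set.range fun β : L => {s : {s : Finset L // p s} | β ∈ s.1}) b) :
    ∃ F : Finset L, SupportedOn F b := by
  classical
  induction hb with
  | base h =>
    obtain ⟨β, rfl⟩ := h
    exact ⟨{β}, fun x y hxy => hxy β (mem_singleton_self β)⟩
  | bot => exact ⟨∅, fun _ _ _ => Iff.rfl⟩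
  | compl _ ih =>
    obtain ⟨F, hF⟩ := ih
    exact ⟨F, fun x y hxy => not_congr (hF x y hxy)⟩
  | inf _ _ ih₁ ih₂ =>
    obtain ⟨F₁, hF₁⟩ := ih₁
    obtain ⟨F₂, hF₂⟩ := ih₂
    exact ⟨F₁ ∪ F₂, fun x y hxy => and_congr (hF₁ x y fun β hβ => hxy β (mem_union_left _ hβ))
      (hF₂ x y fun β hβ => hxy β (mem_union_right _ hβ))⟩

end Supports

lemma exists_injective_finset_card_eq {L : Type*} [Infinite L] {k : ℕ} (hk : 1 ≤ k) (ι : Type*) [Countable ι] :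
    ∃ p : ι → Finset L, Injective p ∧ ∀ i, (p i).card = k := by
  classical
  obtain ⟨S, hS⟩ := Infinite.exists_subset_card_eq L (k - 1)
  obtain ⟨e, he⟩ := exists_injective_nat ι
  let g : ℕ ↪ ↥(↑S : Set L)ᶜ := S.finite_toSet.infinite_compl.natEmbedding
  refine ⟨fun i => insert (g (e i)).1 S,
    fun i j h => he (g.injective (Subtype.ext ((insert_inj (g (e i)).2).1 h))), fun i => ?_⟩
  rw [card_insert_of_notMem (g (e i)).2, hS]
  omega

abbrev BoundedFinset (L : Type*) (k : ℕ) : Type _ := {s : Finset L // s.card ≤ k}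

namespace BoundedFinset

variable {L : Type*} {k : ℕ}

def coordSet (β : L) : Set (BoundedFinset L k) := {x | β ∈ x.1}

def empty : BoundedFinset L k := ⟨∅, by simp⟩

def restrict [DecidableEq L] (R : Finset L) (x : BoundedFinset L k) : BoundedFinset L k :=
  ⟨x.1 ∩ R, (card_le_card inter_subset_left).trans x.2⟩

lemma mem_iff_restrict_mem [DecidableEq L] {F R : Finset L} {b : Set (BoundedFinset L k)}
    (hb : SupportedOn F b) {x : BoundedFinset L k} (hx : Disjoint (x.1 \ R) (F \ R)) :
    x ∈ b ↔ restrict R x ∈ b := by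
  refine hb x _ fun β hβ => ?_
  by_cases hβR : β ∈ R
  · simp [restrict, hβR]
  · simp only [restrict, mem_inter, hβR, and_false, iff_false]
    exact fun hβx => disjoint_left.1 hx (mem_sdiff.2 ⟨hβx, hβR⟩) (mem_sdiff.2 ⟨hβ, hβR⟩)

section DeltaSystemFamily

variable [DecidableEq L] {u : Finset (Set (BoundedFinset L k))}
  {F : Set (BoundedFinset L k) → Finset L} {R : Finset L}

/-- The sets `F b \ R` are pairwise disjoint, so `x` meets at most `|x \ R|` of them;
for every other `b ∈ u`, membership of `x` in `b` is that of `x ∩ R`. -/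
lemma card_add_card_inter_le (hsupp : ∀ b ∈ u, SupportedOn (F b) b) (hΔ : IsDeltaSystem u F R)
    {x : BoundedFinset L k} {S : Finset (Set (BoundedFinset L k))} (hSu : S ⊆ u)
    (hS : ∀ b ∈ S, ¬(x ∈ b ↔ restrict R x ∈ b)) : S.card + (x.1 ∩ R).card ≤ k := by
  have hcard : S.card ≤ (x.1 \ R).card :=
    card_le_card_of_forall_not_disjoint (hΔ.pairwiseDisjoint_sdiff.subset (coe_subset.2 hSu))
      fun b hb hdisj => hS b hb (mem_iff_restrict_mem (hsupp b (hSu hb)) hdisj)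
  have := card_sdiff_add_card_inter x.1 R
  have := x.2
  omega

/-- All `b ∈ u` agree at `x ∩ R`. Since `N` is too large to be all met by `x`, that common
value is `¬e`; then `x` meets every member of `P`, which exhausts `x`, so `x ∩ R = ∅`. -/
lemma empty_mem_iff (hsupp : ∀ b ∈ u, SupportedOn (F b) b) (hΔ : IsDeltaSystem u F R)
    (hagree : ∀ b ∈ u, ∀ b' ∈ u, ∀ y : BoundedFinset L k, y.1 ⊆ R → (y ∈ b ↔ y ∈ b'))
    {P N : Finset (Set (BoundedFinset L k))} (hPu : P ⊆ u) (hNu : N ⊆ u) (hP : k ≤ P.card)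
    (hN : k < N.card) {e : Prop} {x : BoundedFinset L k} (hxP : ∀ b ∈ P, x ∈ b ↔ e)
    (hxN : ∀ b ∈ N, x ∈ b ↔ ¬e) {b₀ : Set (BoundedFinset L k)} (hb₀ : b₀ ∈ u) :
    empty ∈ b₀ ↔ ¬e := by
  have hv : ∀ b ∈ u, restrict R x ∈ b ↔ restrict R x ∈ b₀ :=
    fun b hb => hagree b hb b₀ hb₀ _ inter_subset_right
  have hve : restrict R x ∈ b₀ ↔ ¬e := by
    by_contra hve
    have := card_add_card_inter_le hsupp hΔ hNu fun b hb => by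
      rw [hxN b hb, hv b (hNu hb)]
      tauto
    omega
  have hxR : x.1 ∩ R = ∅ := card_eq_zero.1 <| by
    have := card_add_card_inter_le hsupp hΔ hPu fun b hb => by
      rw [hxP b hb, hv b (hPu hb)]
      tauto
    omega
  rwa [show empty = restrict R x from Subtype.ext hxR.symm]

lemma not_nIndepSet_of_isDeltaSystem (hu : u.card = 2 * k + 1)
    (hsupp : ∀ b ∈ u, SupportedOn (F b) b) (hΔ : IsDeltaSystem u F R)
    (hagree : ∀ b ∈ u, ∀ b' ∈ u, ∀ y : BoundedFinset L k, y.1 ⊆ R → (y ∈ b ↔ y ∈ b')) :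
    ¬NIndepSet (2 * k + 1) (u : Set (Set (BoundedFinset L k))) := by
  intro hind
  obtain ⟨P, hPu, hP⟩ := exists_subset_card_eq (show k ≤ u.card by omega)
  have hN : (u \ P).card = k + 1 := by rw [card_sdiff_of_subset hPu]; omega
  obtain ⟨x₁, hx₁P, hx₁N⟩ := hind.exists_forall_mem_forall_not_mem (coe_subset.2 hPu)
    (coe_subset.2 sdiff_subset) disjoint_sdiff (by omega)
  obtain ⟨x₂, hx₂N, hx₂P⟩ := hind.exists_forall_mem_forall_not_mem (coe_subset.2 sdiff_subset)
    (coe_subset.2 hPu) sdiff_disjoint (by omega)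
  obtain ⟨b₀, hb₀⟩ : u.Nonempty := card_pos.1 (by omega)
  have h₁ : empty ∈ b₀ ↔ ¬True := empty_mem_iff hsupp hΔ hagree hPu (N := u \ P) sdiff_subset hP.ge
    (by omega) (fun b hb => iff_true_intro (hx₁P b hb)) (fun b hb => by simpa using hx₁N b hb) hb₀
  have h₂ : empty ∈ b₀ ↔ ¬False := empty_mem_iff hsupp hΔ hagree hPu (N := u \ P) sdiff_subset hP.ge
    (by omega) (fun b hb => iff_false_intro (hx₂P b hb)) (fun b hb => by simpa using hx₂N b hb) hb₀
  exact h₁.1 (h₂.2 not_false) trivial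

end DeltaSystemFamily

theorem countable_of_nIndepSet {Y : Set (Set (BoundedFinset L k))}
    (hgen : ∀ b ∈ Y, GenBA (Set.range coordSet) b) (hind : NIndepSet (2 * k + 1) Y) :
    Y.Countable := by
  classical
  by_contra hY
  choose! F hF using fun b hb => (hgen b hb).exists_supportedOn
  obtain ⟨n, hn⟩ := Set.exists_infinite_fiber_of_not_countable hY fun b => (F b).card
  obtain ⟨T, hTY, hT, R, hΔ⟩ := hn.exists_isDeltaSystem fun b hb => le_of_eq hb.2
  have : Finite {y : BoundedFinset L k // y.1 ⊆ R} := Finite.of_injective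
    (fun y => (⟨y.1.1, mem_powerset.2 y.2⟩ : R.powerset))
    fun y z h => Subtype.ext (Subtype.ext (by simpa using h))
  obtain ⟨φ, hφ⟩ := hT.exists_infinite_fiber fun b (y : {y : BoundedFinset L k // y.1 ⊆ R}) =>
    y.1 ∈ b
  obtain ⟨u, huT, hu⟩ := hφ.exists_subset_card_eq (2 * k + 1)
  have huY : (u : Set (Set (BoundedFinset L k))) ⊆ Y := fun b hb => (hTY (huT hb).1).1
  refine not_nIndepSet_of_isDeltaSystem hu (fun b hb => hF b (huY hb))
    (hΔ.mono fun b hb => (huT hb).1) (fun b hb b' hb' y hy => ?_) (hind.mono huY)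
  exact Iff.of_eq (congrFun ((huT hb).2.trans (huT hb').2.symm) ⟨y, hy⟩)

lemma genBA_singleton {x : BoundedFinset L k} (hx : x.1.card = k) :
    GenBA (Set.range coordSet) {x} := by
  have : {x} = x.1.inf coordSet := by
    ext y
    simp only [Set.mem_singleton_iff, inf_set_eq_iInter, Set.mem_iInter, coordSet,
      Set.mem_ofPred_eq]
    exact ⟨by rintro rfl β hβ; exact hβ,
      fun h => (Subtype.ext (eq_of_subset_of_card_le h (y.2.trans hx.ge))).symm⟩
  rw [this]
  exact GenBA.finset_inf fun β _ => GenBA.base ⟨β, rfl⟩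

lemma exists_nIndepSet_card_eq [Infinite L] (hk : 1 ≤ k) (m n : ℕ) :
    ∃ Y : Set (Set (BoundedFinset L k)),
      (∀ b ∈ Y, GenBA (Set.range coordSet) b) ∧ NIndepSet m Y ∧ #Y = n := by
  classical
  obtain ⟨p, hp, hpk⟩ := exists_injective_finset_card_eq (L := L) hk (Finset (Fin n))
  let a : Finset (Fin n) → Set (BoundedFinset L k) := fun T => {⟨p T, (hpk T).le⟩}
  have ha : Pairwise (Disjoint on a) := fun T T' h =>
    Set.disjoint_singleton.2 fun h' => h (hp (congrArg Subtype.val h'))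
  have hne : ∀ T, a T ≠ ⊥ := fun T => Set.singleton_ne_empty _
  refine ⟨Set.range (supContaining a), ?_, nIndepSet_range_supContaining ha hne m, ?_⟩
  · rintro _ ⟨i, rfl⟩
    exact GenBA.finset_sup fun T _ => genBA_singleton (hpk T)
  · simpa using Cardinal.mk_range_eq_of_injective (supContaining_injective ha hne)

end BoundedFinset

lemma Cardinal.sSup_eq_aleph0 {S : Set Cardinal.{u}} (hle : ∀ c ∈ S, c ≤ ℵ₀)
    (hnat : ∀ n : ℕ, (n : Cardinal) ∈ S) : sSup S = ℵ₀ :=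
  le_antisymm (csSup_le ⟨0, by exact_mod_cast hnat 0⟩ hle)
    (aleph0_le.2 fun n => le_csSup ⟨ℵ₀, hle⟩ (hnat n))

/-- Let `λ` be infinite, `k ≥ 1`, `n = 2k`, `𝒳 = {x ∈ ^λ2 : |x⁻¹(1)| ≤ k}`
(identified with the subsets of `λ` of size `≤ k`), and let `B` be the algebra
of subsets of `𝒳` generated by the sets `Z_α = {x ∈ 𝒳 : x(α) = 1}`. Then
`ind_{n+1}(B) = ℵ₀`: the supremum of the cardinalities of
`(n+1)`-independent subsets of `B` is `ℵ₀`. -/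
theorem stmt9 {L : Type u} [Infinite L] (k : ℕ) (hk : 1 ≤ k) :
    sSup {c : Cardinal.{u} |
      ∃ Y : Set (Set {s : Finset L // s.card ≤ k}),
        (∀ b ∈ Y, GenBA (Set.range fun β : L =>
          {s : {s : Finset L // s.card ≤ k} | β ∈ s.1}) b) ∧
        NIndepSet (2 * k + 1) Y ∧ #Y = c} = ℵ₀ := by
  refine Cardinal.sSup_eq_aleph0 ?_ fun n => BoundedFinset.exists_nIndepSet_card_eq hk _ n
  rintro c ⟨Y, hgen, hind, rfl⟩
  exact mk_le_aleph0_iff.2 (BoundedFinset.countable_of_nIndepSet hgen hind).to_subtype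
end

section
/- Let B be a Boolean algebra, k ≥ 1 and μ a cardinal. Suppose there is a sequence ⟨x_i : i < ℶ_{2k}(μ)^+⟩ in B such that for all i₀ < i₁ < … < i_{2k-1} < ℶ_{2k}(μ)^+ the element ⋀_{l<k} x_{i_{2l}} ∧ (-x_{i_{2l+1}}) is nonzero. Then there is a sequence ⟨y_j : j < μ^+⟩ in B such that for every w ∈ [μ^+]^k there is an ultrafilter D on B with: for all j < μ^+, y_j ∈ D iff j ∈ w. -/
/-
Colour each increasing `(2k+1)`-tuple `t` of indices by recording, for every position `m`,
whether `x (t m)` lies in a fixed ultrafilter containing the alternating meet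
`⋀_l x_{i_{2l}} ⊓ (x_{i_{2l+1}})ᶜ` of the remaining `2k`-tuple. By Erdős–Rado there is a
homogeneous increasing sequence `g` of length `μ⁺`; read it in consecutive pairs and put
`y_j = x_{g(2j)} ⊓ (x_{g(2j+1)})ᶜ`. For `|w| = k`, take the ultrafilter attached to the `2k`-tuple
of the pairs indexed by `w`: it contains `y_j` for `j ∈ w`, and for `j ∉ w` homogeneity, applied to
the two tuples obtained by inserting either member of the `j`-th pair at the same position, shows
that it contains both or neither of `x_{g(2j)}`, `x_{g(2j+1)}`, hence not `y_j`.
-/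

open Cardinal Order

universe u

/-- Iterated beth function starting at `μ`: `ℶ_0(μ) = μ`, `ℶ_{m+1}(μ) = 2^{ℶ_m(μ)}`. -/
def bethIter (μ : Cardinal.{u}) : ℕ → Cardinal.{u}
  | 0 => μ
  | m + 1 => 2 ^ bethIter μ m

section BoolHom

variable {B : Type*} [BooleanAlgebra B]

open Classical in
noncomputable def Order.Ideal.IsPrime.toBoolHom {J : Order.Ideal B} (hJ : J.IsPrime) :
    BoundedLatticeHom B Bool where
  toFun a := decide (a ∉ J)
  map_sup' a b := by simp [Order.Ideal.sup_mem_iff]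
  map_inf' a b := by
    have : a ⊓ b ∈ J ↔ a ∈ J ∨ b ∈ J :=
      ⟨hJ.mem_or_mem, fun h => h.elim (J.lower inf_le_left) (J.lower inf_le_right)⟩
    simp [this, not_or]
  map_top' := by simp [hJ.toIsProper.top_notMem]
  map_bot' := by simp [J.bot_mem]

theorem exists_boolHom_apply_eq_true {b : B} (hb : b ≠ ⊥) :
    ∃ D : BoundedLatticeHom B Bool, D b = true := by
  have hdisj : Disjoint (PFilter.principal b : Set B)
      ((Order.Ideal.principal (⊥ : B) : Order.Ideal B) : Set B) :=
    Set.disjoint_left.2 fun z hbz hz =>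
      hb (le_bot_iff.1 ((PFilter.mem_principal.1 hbz).trans (Order.Ideal.mem_principal.1 hz)))
  obtain ⟨J, hJ, -, hbJ⟩ := DistribLattice.prime_ideal_of_disjoint_filter_ideal hdisj
  refine ⟨hJ.toBoolHom, ?_⟩
  simpa [Order.Ideal.IsPrime.toBoolHom] using
    Set.disjoint_left.1 hbJ (PFilter.mem_principal.2 le_rfl)

end BoolHom

theorem Cardinal.IsRegular.exists_forall_lt {c : Cardinal.{u}} (hc : c.IsRegular)
    {S : Set c.ord.ToType} (hS : #S < c) : ∃ a, ∀ s ∈ S, s < a := by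
  by_contra! h
  have := Order.cof_le (α := c.ord.ToType) (s := S) h
  rw [Ordinal.cof_toType, hc.cof_ord] at this
  exact this.not_gt hS

theorem Cardinal.mk_union_iUnion_le {α ι : Type u} {κ : Cardinal.{u}} (hκ : ℵ₀ ≤ κ)
    {s : Set α} {f : ι → Set α} (hs : #s ≤ κ) (hι : #ι ≤ κ) (hf : ∀ i, #(f i) ≤ κ) :
    #(s ∪ ⋃ i, f i : Set α) ≤ κ := by
  have hU : #(⋃ i, f i : Set α) ≤ κ :=
    (mk_iUnion_le f).trans ((mul_le_mul' hι (ciSup_le' hf)).trans (mul_eq_self hκ).le)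
  exact (mk_union_le _ _).trans ((add_le_add hs hU).trans (add_eq_self hκ).le)

theorem mk_Iio_toType_succ_le {ν : Cardinal.{u}} (ξ : (succ ν).ord.ToType) : #(Set.Iio ξ) ≤ ν := by
  have hξ := mk_Iio_lt ξ (by rw [mk_toType, card_ord, Ordinal.type_toType])
  rwa [mk_toType, card_ord, lt_succ_iff] at hξ

theorem exists_strictMono_toType_of_le_mk {β : Type u} [LinearOrder β] [WellFoundedLT β]
    {c : Cardinal.{u}} {S : Set β} (hS : c ≤ #S) :
    ∃ g : c.ord.ToType → β, StrictMono g ∧ ∀ i, g i ∈ S := by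
  have hle : Ordinal.type ((· < ·) : c.ord.ToType → c.ord.ToType → Prop) ≤
      Ordinal.type ((· < ·) : S → S → Prop) := by
    rw [Ordinal.type_toType]
    exact (ord_le_ord.2 hS).trans (ord_le_type _)
  obtain ⟨f⟩ := Ordinal.type_le_iff'.1 hle
  exact ⟨fun i => f i, fun i j hij => f.map_rel_iff.2 hij, fun i => (f i).2⟩

theorem exists_strictMono_lex_bool {c : Cardinal.{u}} (hc : ℵ₀ ≤ c) :
    ∃ p : c.ord.ToType ×ₗ Bool → c.ord.ToType, StrictMono p := by
  have hle : Ordinal.type (Prod.Lex ((· < ·) : c.ord.ToType → c.ord.ToType → Prop)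
      ((· < ·) : ULift.{u} Bool → ULift Bool → Prop)) ≤
      Ordinal.type ((· < ·) : c.ord.ToType → c.ord.ToType → Prop) := by
    refine le_of_eq_of_le (Ordinal.type_prod_lex _ _) ?_
    rw [Ordinal.type_toType, Ordinal.mul_le_iff_of_isSuccLimit (isSuccLimit_ord hc)]
    exact fun b hb => (Ordinal.isPrincipal_mul_ord hc
      (lt_ord.2 (by simpa using (natCast_lt_aleph0 (n := 2)).trans_le hc)) hb).le
  obtain ⟨f⟩ := Ordinal.type_le_iff'.1 hle
  refine ⟨fun x => f ((ofLex x).1, ULift.up (ofLex x).2), fun x y hxy => f.map_rel_iff.2 ?_⟩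
  rw [← toLex_ofLex x, ← toLex_ofLex y, Prod.Lex.toLex_lt_toLex] at hxy
  exact Prod.lex_def.2 hxy

namespace Fin

variable {α : Type*} [LinearOrder α] {n : ℕ}

theorem lt_card_filter_lt_iff {q : Fin n → α} (hq : Monotone q) (z : α) (i : Fin n) :
    i.val < (Finset.univ.filter fun j => q j < z).card ↔ q i < z := by
  constructor
  · intro hi
    by_contra! hzi
    have hsub : Finset.univ.filter (fun j => q j < z) ⊆ Finset.Iio i := fun j hj =>
      Finset.mem_Iio.2 (hq.reflect_lt ((Finset.mem_filter.1 hj).2.trans_le hzi))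
    have := Finset.card_le_card hsub
    rw [card_Iio] at this
    omega
  · intro hi
    have hsub : Finset.Iic i ⊆ Finset.univ.filter (fun j => q j < z) := fun j hj =>
      Finset.mem_filter.2 ⟨Finset.mem_univ j, (hq (Finset.mem_Iic.1 hj)).trans_lt hi⟩
    have := Finset.card_le_card hsub
    rw [card_Iic] at this
    omega

theorem strictMono_insertNth_card_filter {q : Fin n → α} (hq : StrictMono q) {z : α}
    (hz : ∀ i, q i ≠ z) :
    StrictMono (insertNth ⟨(Finset.univ.filter fun j => q j < z).card,
      Nat.lt_succ_of_le ((Finset.card_filter_le _ _).trans_eq (Finset.card_fin n))⟩ z q) := by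
  rw [strictMono_insertNth_iff]
  refine ⟨hq, fun i hi => (lt_card_filter_lt_iff hq.monotone z i).1 hi, fun i hi => ?_⟩
  have hzi : ¬ q i < z := fun h =>
    not_lt.2 (Fin.le_def.1 hi) ((lt_card_filter_lt_iff hq.monotone z i).2 h)
  exact lt_of_le_of_ne (not_lt.1 hzi) (hz i).symm

theorem exists_strictMono_insertNth_of_forall_lt_iff {q : Fin n → α} (hq : StrictMono q)
    {z z' : α} (hzz' : ∀ i, q i < z ↔ q i < z') (hz : ∀ i, q i ≠ z) (hz' : ∀ i, q i ≠ z') :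
    ∃ m, StrictMono (insertNth m z q) ∧ StrictMono (insertNth m z' q) := by
  refine ⟨_, strictMono_insertNth_card_filter hq hz, ?_⟩
  simpa only [hzz'] using strictMono_insertNth_card_filter hq hz'

end Fin

section Saturation

variable {T I X : Type u} (tp : (I → T) → T → X)

def addRealizers (P : Set T) : Set T :=
  P ∪ ⋃ e : I → P, Set.range fun x : Set.range (tp (Subtype.val ∘ e)) => x.2.choose

theorem exists_mem_addRealizers {P : Set T} (e : I → T) (he : ∀ i, e i ∈ P) (b : T) :
    ∃ b' ∈ addRealizers tp P, tp e b' = tp e b := by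
  let e' : I → P := fun i => ⟨e i, he i⟩
  let x : Set.range (tp (Subtype.val ∘ e')) := ⟨tp e b, b, rfl⟩
  exact ⟨x.2.choose, Or.inr (Set.mem_iUnion.2 ⟨e', x, rfl⟩), x.2.choose_spec⟩

theorem subset_addRealizers (P : Set T) : P ⊆ addRealizers tp P := Set.subset_union_left

variable {ν κ : Cardinal.{u}}

theorem mk_addRealizers_le (hκ : ℵ₀ ≤ κ) (hκν : κ ^ ν = κ) (hI : #I ≤ ν) (hX : #X ≤ κ)
    {P : Set T} (hP : #P ≤ κ) : #(addRealizers tp P) ≤ κ := by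
  have hfun : #(I → P) ≤ κ := by
    rw [← power_def]
    calc #P ^ #I ≤ κ ^ #I := power_le_power_right hP
      _ ≤ κ ^ ν := power_le_power_left (aleph0_pos.trans_le hκ).ne' hI
      _ = κ := hκν
  exact mk_union_iUnion_le hκ hP hfun fun e => mk_range_le.trans ((mk_subtype_le _).trans hX)

noncomputable def realizerStage (ν : Cardinal.{u}) (M₀ : Set T) : (succ ν).ord.ToType → Set T :=
  WellFoundedLT.fix fun ξ stage => addRealizers tp (M₀ ∪ ⋃ η : Set.Iio ξ, stage η η.2)

theorem realizerStage_eq (M₀ : Set T) (ξ : (succ ν).ord.ToType) :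
    realizerStage tp ν M₀ ξ = addRealizers tp (M₀ ∪ ⋃ η : Set.Iio ξ, realizerStage tp ν M₀ η) :=
  WellFoundedLT.fix_eq _ ξ

theorem mk_realizerStage_le (hν : ℵ₀ ≤ ν) (hνκ : ν < κ) (hκν : κ ^ ν = κ) (hI : #I ≤ ν)
    (hX : #X ≤ κ) {M₀ : Set T} (hM₀ : #M₀ ≤ κ) (ξ : (succ ν).ord.ToType) :
    #(realizerStage tp ν M₀ ξ) ≤ κ := by
  have hκ : ℵ₀ ≤ κ := hν.trans hνκ.le
  induction ξ using WellFoundedLT.induction with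
  | _ ξ ih =>
    rw [realizerStage_eq]
    refine mk_addRealizers_le tp hκ hκν hI hX (mk_union_iUnion_le hκ hM₀ ?_ fun η => ih η η.2)
    exact (mk_Iio_toType_succ_le ξ).trans hνκ.le

theorem exists_saturated_superset (hν : ℵ₀ ≤ ν) (hνκ : ν < κ) (hκν : κ ^ ν = κ) (hI : #I ≤ ν)
    (hX : #X ≤ κ) {M₀ : Set T} (hM₀ : #M₀ ≤ κ) :
    ∃ M, M₀ ⊆ M ∧ #M ≤ κ ∧ ∀ e : I → T, (∀ i, e i ∈ M) → ∀ b, ∃ b' ∈ M, tp e b' = tp e b := by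
  have hreg : (succ ν).IsRegular := isRegular_succ hν
  have : Nonempty (succ ν).ord.ToType := Ordinal.nonempty_toType_iff.2 hreg.ord_pos.ne'
  refine ⟨⋃ ξ, realizerStage tp ν M₀ ξ, fun a ha => ?_, ?_, fun e he b => ?_⟩
  · refine Set.mem_iUnion.2 ⟨Classical.arbitrary _, ?_⟩
    rw [realizerStage_eq]
    exact subset_addRealizers tp _ (Or.inl ha)
  · have hκ : ℵ₀ ≤ κ := hν.trans hνκ.le
    have hJ : #(succ ν).ord.ToType ≤ κ := by
      rw [mk_toType, card_ord]
      exact succ_le_of_lt hνκ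
    simpa using mk_union_iUnion_le hκ (s := ∅) (by simp) hJ
      (mk_realizerStage_le tp hν hνκ hκν hI hX hM₀)
  · choose ξ hξ using fun i => Set.mem_iUnion.1 (he i)
    obtain ⟨ξ', hξ'⟩ := hreg.exists_forall_lt (S := Set.range ξ)
      (mk_range_le.trans_lt (hI.trans_lt (lt_succ ν)))
    obtain ⟨b', hb', hb'b⟩ := exists_mem_addRealizers tp
      (P := M₀ ∪ ⋃ η : Set.Iio ξ', realizerStage tp ν M₀ η) e
      (fun i => Or.inr (Set.mem_iUnion.2 ⟨⟨ξ i, hξ' _ ⟨i, rfl⟩⟩, hξ i⟩)) b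
    refine ⟨b', Set.mem_iUnion.2 ⟨ξ', ?_⟩, hb'b⟩
    rw [realizerStage_eq]
    exact hb'

end Saturation

theorem exists_seq_of_forall_extend {J T : Type*} [LinearOrder J] [WellFoundedLT J] {S : Set T}
    {R : (ξ : J) → (Set.Iio ξ → T) → T → Prop}
    (hR : ∀ ξ (prev : Set.Iio ξ → T), (∀ η, prev η ∈ S) → ∃ b ∈ S, R ξ prev b) :
    ∃ a : J → T, ∀ ξ, a ξ ∈ S ∧ R ξ (fun η => a η) (a ξ) := by
  let a : J → S := WellFoundedLT.fix fun ξ prev =>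
    ⟨(hR ξ (fun η => prev η η.2) fun η => (prev η η.2).2).choose,
      (hR ξ (fun η => prev η η.2) fun η => (prev η η.2).2).choose_spec.1⟩
  refine ⟨fun ξ => a ξ, fun ξ => ⟨(a ξ).2, ?_⟩⟩
  have ha : a ξ = _ := WellFoundedLT.fix_eq _ ξ
  simp only [ha]
  exact (hR ξ _ fun η => (a η).2).choose_spec.2

section EndHomogeneous

variable {T C I : Type u} [LinearOrder T] {m : ℕ}

/-- The type of `b` over `e`, as far as the colouring `f` and the order can detect it. -/
def tupleType (f : (Fin (m + 1) → T) → C) (e : I → T) (b : T) : ((Fin m → I) → C) × Set I :=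
  (fun v => f (Fin.snoc (e ∘ v) b), {i | e i < b})

omit [LinearOrder T] in
theorem mk_tupleType_codomain_le {ν κ : Cardinal.{u}} (hν : ℵ₀ ≤ ν) (hνκ : ν < κ)
    (hκν : κ ^ ν = κ) (hI : #I ≤ ν) (hC : #C ≤ κ) :
    #(((Fin m → I) → C) × Set I) ≤ κ := by
  have hκ : ℵ₀ ≤ κ := hν.trans hνκ.le
  have hpow : ∀ {c d : Cardinal.{u}}, c ≤ κ → d ≤ ν → c ^ d ≤ κ := fun hc hd =>
    ((power_le_power_right hc).trans (power_le_power_left (aleph0_pos.trans_le hκ).ne' hd)).trans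
      hκν.le
  have hcol : #((Fin m → I) → C) ≤ κ := by
    rw [← power_def]
    exact hpow hC (by simpa using (power_le_power_right hI).trans (power_nat_le (n := m) hν))
  have hset : #(Set I) ≤ κ := by
    rw [mk_set]
    exact hpow ((natCast_lt_aleph0 (n := 2)).le.trans hκ) hI
  simpa using (mul_le_mul' hcol hset).trans (mul_eq_self hκ).le

theorem exists_extension_of_saturated (f : (Fin (m + 1) → T) → C) {M : Set T} (hM : M.Nonempty)
    (hsat : ∀ e : I → T, (∀ i, e i ∈ M) → ∀ b, ∃ b' ∈ M, tupleType f e b' = tupleType f e b)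
    {a' : T} (ha' : ∀ b ∈ M, b < a') {K : Type u} (hK : #K ≤ #I) (prev : K → T)
    (hprev : ∀ η, prev η ∈ M) :
    ∃ b ∈ M, (∀ η, prev η < b) ∧
      ∀ v : Fin m → K, f (Fin.snoc (prev ∘ v) b) = f (Fin.snoc (prev ∘ v) a') := by
  classical
  obtain ⟨ι⟩ := (le_def _ _).1 hK
  let e := Function.extend ι prev fun _ => hM.some
  have he : ∀ i, e i ∈ M := fun i => by
    simp only [e, Function.extend_def]
    split_ifs
    exacts [hprev _, hM.some_mem]
  have heι : e ∘ ι = prev := funext fun η => ι.injective.extend_apply prev (fun _ => hM.some) η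
  obtain ⟨b, hbM, hb⟩ := hsat e he a'
  refine ⟨b, hbM, fun η => ?_, fun v => ?_⟩
  · have h := Set.ext_iff.1 (congrArg Prod.snd hb) (ι η)
    simp only [tupleType, ← Function.comp_apply (f := e), heι, Set.mem_ofPred_eq] at h
    exact h.2 (ha' _ (hprev η))
  · simpa only [tupleType, ← Function.comp_assoc, heι] using congrFun (congrArg Prod.fst hb) (ι ∘ v)

end EndHomogeneous

-- A point `a'` above a `ν`-saturated set `M` has its type over every initial segment of the
-- sequence realized in `M`; choosing such realizations recursively gives the sequence `a`.
theorem exists_endHomogeneous {ν κ : Cardinal.{u}} (hν : ℵ₀ ≤ ν) (hνκ : ν < κ) (hκν : κ ^ ν = κ)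
    {m : ℕ} {C : Type u} (hC : #C ≤ κ) (f : (Fin (m + 1) → (succ κ).ord.ToType) → C) :
    ∃ (a : (succ ν).ord.ToType → (succ κ).ord.ToType) (a' : (succ κ).ord.ToType),
      StrictMono a ∧ ∀ ξ (v : Fin m → Set.Iio ξ),
        f (Fin.snoc (fun i => a (v i)) (a ξ)) = f (Fin.snoc (fun i => a (v i)) a') := by
  have hκ : ℵ₀ ≤ κ := hν.trans hνκ.le
  have hI : #ν.ord.ToType = ν := by rw [mk_toType, card_ord]
  have : Nonempty (succ κ).ord.ToType :=
    Ordinal.nonempty_toType_iff.2 (isRegular_succ hκ).ord_pos.ne'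
  obtain ⟨M, hM₀, hMcard, hMsat⟩ := exists_saturated_superset (tupleType f) hν hνκ hκν hI.le
    (mk_tupleType_codomain_le hν hνκ hκν hI.le hC) (M₀ := {Classical.arbitrary _})
    (by simpa using one_le_aleph0.trans hκ)
  obtain ⟨a', ha'⟩ := (isRegular_succ hκ).exists_forall_lt (hMcard.trans_lt (lt_succ _))
  obtain ⟨a, ha⟩ := exists_seq_of_forall_extend (J := (succ ν).ord.ToType) (S := M)
    (R := fun ξ prev b => (∀ η, prev η < b) ∧
      ∀ v : Fin m → Set.Iio ξ, f (Fin.snoc (prev ∘ v) b) = f (Fin.snoc (prev ∘ v) a'))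
    fun ξ prev hprev => exists_extension_of_saturated f ⟨_, hM₀ rfl⟩ hMsat ha'
      ((mk_Iio_toType_succ_le ξ).trans hI.ge) prev hprev
  exact ⟨a, a', fun η ξ h => (ha ξ).2.1 ⟨η, h⟩, fun ξ v => (ha ξ).2.2 v⟩

theorem le_bethIter (μ : Cardinal.{u}) (n : ℕ) : μ ≤ bethIter μ n := by
  induction n with
  | zero => exact le_rfl
  | succ m ih => exact ih.trans (cantor _).le

theorem erdos_rado {μ : Cardinal.{u}} (hμ : ℵ₀ ≤ μ) (n : ℕ) {C : Type u} (hC : #C ≤ μ)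
    (f : (Fin (n + 1) → (succ (bethIter μ n)).ord.ToType) → C) :
    ∃ g : (succ μ).ord.ToType → (succ (bethIter μ n)).ord.ToType, StrictMono g ∧
      ∀ v w : Fin (n + 1) → (succ μ).ord.ToType, StrictMono v → StrictMono w →
        f (g ∘ v) = f (g ∘ w) := by
  induction n with
  | zero =>
    have hβ : #(succ μ).ord.ToType = succ μ := by rw [mk_toType, card_ord]
    obtain ⟨c, hc⟩ := infinite_pigeonhole (fun t : (succ μ).ord.ToType => f fun _ => t)
      (by rw [hβ]; exact hμ.trans (le_succ μ))
      (by rw [hβ, (isRegular_succ hμ).cof_ord]; exact hC.trans_lt (lt_succ μ))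
    obtain ⟨g, hg, hgc⟩ := exists_strictMono_toType_of_le_mk (c := succ μ) (hc.trans hβ).ge
    have hconst : ∀ v : Fin 1 → (succ μ).ord.ToType, f (g ∘ v) = c := fun v => by
      rw [← hgc (v 0)]
      exact congrArg f (funext fun i => by rw [Fin.fin_one_eq_zero i]; rfl)
    exact ⟨g, hg, fun v w _ _ => (hconst v).trans (hconst w).symm⟩
  | succ n ih =>
    have hν : ℵ₀ ≤ bethIter μ n := hμ.trans (le_bethIter μ n)
    obtain ⟨a, a', ha, hend⟩ := exists_endHomogeneous hν (cantor _)
      (by rw [← power_mul, mul_eq_self hν]) (hC.trans (le_bethIter μ (n + 1))) f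
    obtain ⟨h, hh, hhom⟩ := ih (fun v => f (Fin.snoc (a ∘ v) a'))
    have hlast : ∀ u : Fin (n + 2) → (succ μ).ord.ToType, StrictMono u →
        f ((a ∘ h) ∘ u) = f (Fin.snoc (a ∘ h ∘ Fin.init u) a') := fun u hu =>
      (congrArg f (Fin.snoc_init_self _).symm).trans
        (hend _ fun i => ⟨h (u i.castSucc), hh (hu (Fin.castSucc_lt_last i))⟩)
    refine ⟨a ∘ h, ha.comp hh, fun v w hv hw => ?_⟩
    rw [hlast v hv, hlast w hw]
    exact hhom _ _ (hv.comp Fin.strictMono_castSucc) (hw.comp Fin.strictMono_castSucc)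

section Interleave

variable {J J' : Type*} {k : ℕ}

def interleave (p : J' ×ₗ Bool → J) (σ : Fin k → J') : Fin (2 * k) → J :=
  fun i => p (toLex (σ ⟨i / 2, by omega⟩, decide (i.val % 2 = 1)))

variable {p : J' ×ₗ Bool → J} {σ : Fin k → J'}

theorem interleave_two_mul (l : Fin k) :
    interleave p σ ⟨2 * l, by omega⟩ = p (toLex (σ l, false)) := by
  simp [interleave]

theorem interleave_two_mul_add_one (l : Fin k) :
    interleave p σ ⟨2 * l + 1, by omega⟩ = p (toLex (σ l, true)) := by
  simp [interleave, Nat.add_mod, show (2 * (l : ℕ) + 1) / 2 = l by omega]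

variable [LinearOrder J] [LinearOrder J']

theorem strictMono_interleave (hp : StrictMono p) (hσ : StrictMono σ) :
    StrictMono (interleave p σ) := by
  intro i i' hii'
  have hii'' := Fin.lt_def.1 hii'
  refine hp (Prod.Lex.toLex_lt_toLex.2 ?_)
  rcases (Nat.div_le_div_right (c := 2) hii''.le).lt_or_eq with h | h
  · exact Or.inl (hσ h)
  · have hi : i.val % 2 = 0 := by omega
    have hi' : i'.val % 2 = 1 := by omega
    simp [h, hi, hi']

theorem interleave_lt_iff (hp : StrictMono p) {i : Fin (2 * k)} {j : J'} (b : Bool)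
    (hj : σ ⟨i / 2, by omega⟩ ≠ j) :
    interleave p σ i < p (toLex (j, b)) ↔ σ ⟨i / 2, by omega⟩ < j := by
  rw [interleave, hp.lt_iff_lt, Prod.Lex.toLex_lt_toLex]
  simp [hj]

end Interleave

section Coloring

variable {B J : Type*} [BooleanAlgebra B]

def alternatingInf {k : ℕ} (x : J → B) (s : Fin (2 * k) → J) : B :=
  Finset.univ.inf fun l : Fin k =>
    x (s ⟨2 * l.1, by omega⟩) ⊓ (x (s ⟨2 * l.1 + 1, by omega⟩))ᶜ

noncomputable def deletionColoring {n : ℕ} (x : J → B) (D : (Fin n → J) → BoundedLatticeHom B Bool)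
    (t : Fin (n + 1) → J) : Fin (n + 1) → Bool :=
  fun m => D (t ∘ m.succAbove) (x (t m))

theorem exists_boolHom_apply_iff_mem {J' : Type*} [LinearOrder J] [LinearOrder J'] {k : ℕ}
    (x : J → B) (D : (Fin (2 * k) → J) → BoundedLatticeHom B Bool)
    (hD : ∀ s, StrictMono s → D s (alternatingInf x s) = true)
    (hhom : ∀ t t' : Fin (2 * k + 1) → J, StrictMono t → StrictMono t' →
      deletionColoring x D t = deletionColoring x D t')
    {p : J' ×ₗ Bool → J} (hp : StrictMono p) (w : Finset J') (hw : w.card = k) :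
    ∃ f : BoundedLatticeHom B Bool, ∀ j,
      f (x (p (toLex (j, false))) ⊓ (x (p (toLex (j, true))))ᶜ) = true ↔ j ∈ w := by
  set σ := w.orderEmbOfFin hw
  have hq : StrictMono (interleave p σ) := strictMono_interleave hp σ.strictMono
  refine ⟨D (interleave p σ), fun j => ⟨fun hj => ?_, fun hj => ?_⟩⟩
  · by_contra hjw
    have hσj : ∀ l, σ l ≠ j := fun l h => hjw (h ▸ w.orderEmbOfFin_mem hw l)
    have hne : ∀ i b, interleave p σ i ≠ p (toLex (j, b)) := fun i b h =>
      hσj _ (congrArg (fun z => (ofLex z).1) (hp.injective h))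
    obtain ⟨m, hm, hm'⟩ := Fin.exists_strictMono_insertNth_of_forall_lt_iff hq
      (fun i => (interleave_lt_iff hp false (hσj _)).trans (interleave_lt_iff hp true (hσj _)).symm)
      (hne · false) (hne · true)
    -- inserting either point of the pair at the same position gives the same colour at `m`
    have heq := congrFun (hhom _ _ hm hm') m
    simp only [deletionColoring, Fin.insertNth_comp_succAbove, Fin.insertNth_apply_same] at heq
    rw [map_inf, map_compl', heq] at hj
    simp at hj
  · obtain ⟨l, rfl⟩ : j ∈ Set.range σ := by rwa [Finset.range_orderEmbOfFin]
    have hle : alternatingInf x (interleave p σ) ≤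
        x (p (toLex (σ l, false))) ⊓ (x (p (toLex (σ l, true))))ᶜ := by
      refine (Finset.inf_le (Finset.mem_univ l)).trans_eq ?_
      rw [interleave_two_mul, interleave_two_mul_add_one]
    exact top_le_iff.1 ((hD _ hq).symm.trans_le (OrderHomClass.mono _ hle))

end Coloring

/-- Lemma: if `B` has a sequence `⟨x_i : i < ℶ_{2k}(μ)⁺⟩` such that for all
`i₀ < … < i_{2k-1}` the element `⋀_{l<k} x_{i_{2l}} ∧ (-x_{i_{2l+1}})` is
nonzero, then there is a sequence `⟨y_j : j < μ⁺⟩` in `B` such that for every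
`k`-element set `w ⊆ μ⁺` there is an ultrafilter `D` on `B` (here: a bounded
lattice homomorphism `B → Bool`) with `y_j ∈ D ↔ j ∈ w` for all `j < μ⁺`. -/
theorem stmt12 {B : Type u} [BooleanAlgebra B] (k : ℕ)
    (μ : Cardinal.{u}) (hμ : ℵ₀ ≤ μ)
    (x : (Order.succ (bethIter μ (2 * k))).ord.ToType → B)
    (hx : ∀ g : Fin (2 * k) → (Order.succ (bethIter μ (2 * k))).ord.ToType,
      StrictMono g →
      (Finset.univ.inf fun l : Fin k =>
        x (g ⟨2 * l.1, by have := l.2; omega⟩) ⊓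
          (x (g ⟨2 * l.1 + 1, by have := l.2; omega⟩))ᶜ) ≠ ⊥) :
    ∃ y : (Order.succ μ).ord.ToType → B,
      ∀ w : Finset (Order.succ μ).ord.ToType, w.card = k →
        ∃ f : BoundedLatticeHom B Bool,
          ∀ j : (Order.succ μ).ord.ToType, f (y j) = true ↔ j ∈ w := by
  have : Infinite (succ (bethIter μ (2 * k))).ord.ToType := by
    rw [Cardinal.infinite_iff, mk_toType, card_ord]
    exact (hμ.trans (le_bethIter μ _)).trans (le_succ _)
  obtain ⟨S, hS⟩ := Infinite.exists_subset_card_eq (succ (bethIter μ (2 * k))).ord.ToType (2 * k)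
  obtain ⟨D₀, -⟩ := exists_boolHom_apply_eq_true (hx _ (S.orderEmbOfFin hS).strictMono)
  have hultra : ∀ s, ∃ D : BoundedLatticeHom B Bool,
      StrictMono s → D (alternatingInf x s) = true := fun s =>
    if hs : StrictMono s then (exists_boolHom_apply_eq_true (hx s hs)).imp fun _ h _ => h
    else ⟨D₀, fun h => absurd h hs⟩
  choose D hD using hultra
  obtain ⟨g, hg, hhom⟩ := erdos_rado hμ (2 * k) (C := ULift.{u} (Fin (2 * k + 1) → Bool))
    ((lt_aleph0_of_finite _).le.trans hμ) fun t => ULift.up (deletionColoring x D t)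
  obtain ⟨p, hp⟩ := exists_strictMono_lex_bool (hμ.trans (le_succ μ))
  exact ⟨_, fun w hw => exists_boolHom_apply_iff_mem (x ∘ g) (fun s => D (g ∘ s))
    (fun s hs => hD _ (hg.comp hs)) (fun t t' ht ht' => congrArg ULift.down (hhom t t' ht ht'))
    hp w hw⟩
end

section
/- Let B be a Boolean algebra, k ≥ 1 and μ a cardinal. Suppose there is a sequence ⟨y_j : j < μ⟩ in B such that for every k-element subset w of μ there is an ultrafilter D on B with: y_j ∈ D iff j ∈ w (for all j < μ). Then the sequence ⟨(y_j, -y_j) : j < μ⟩ is a (2k+1)-independent family in B × B; in particular ind^+_{2k+1}(B × B) > μ. -/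
open Cardinal

/-- A family `f : J → A` in a Boolean algebra is `m`-independent: `f` is
injective and every Boolean combination of `m` distinct members (with
arbitrary complementation pattern) is nonzero. -/
def NIndepFam {J : Type v} {A : Type u} [BooleanAlgebra A] (m : ℕ) (f : J → A) : Prop :=
  Function.Injective f ∧
    ∀ s t : Finset J, Disjoint s t → s.card + t.card = m →
      (s.inf f) ⊓ (t.inf fun j => (f j)ᶜ) ≠ ⊥

/-!
A pattern `(s, t)` of `2k+1` distinct indices has `#s ≤ k` or `#t ≤ k`. In the first case
an ultrafilter `D` containing exactly the `y_j` with `j` in some `k`-set `w ⊇ s` avoiding `t`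
witnesses that the first coordinate of the Boolean combination is nonzero; in the second case
one with `w ⊇ t` avoiding `s` does the same for the second coordinate, where `y_j` and `-y_j`
have swapped roles.
-/

namespace BoundedLatticeHom

variable {α β : Type*} [Lattice α] [BoundedOrder α] [Lattice β] [BoundedOrder β]

def fst : BoundedLatticeHom (α × β) α :=
  { LatticeHom.fst with map_top' := rfl, map_bot' := rfl }

def snd : BoundedLatticeHom (α × β) β :=
  { LatticeHom.snd with map_top' := rfl, map_bot' := rfl }

@[simp] theorem fst_apply (p : α × β) : fst p = p.1 := rfl

@[simp] theorem snd_apply (p : α × β) : snd p = p.2 := rfl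

theorem finset_inf_inf_compl_ne_bot {J A : Type*} [BooleanAlgebra A]
    (f : BoundedLatticeHom A Bool) (a : J → A) {s t : Finset J}
    (hs : ∀ j ∈ s, f (a j) = true) (ht : ∀ j ∈ t, f (a j) = false) :
    s.inf a ⊓ t.inf (fun j => (a j)ᶜ) ≠ ⊥ := by
  intro h
  have hs' : f (s.inf a) = ⊤ := by
    rw [map_finset_inf, Finset.inf_eq_top_iff]
    exact hs
  have ht' : f (t.inf fun j => (a j)ᶜ) = ⊤ := by
    rw [map_finset_inf, Finset.inf_eq_top_iff]
    intro j hj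
    simp [ht j hj]
  simpa [hs', ht'] using congrArg f h

end BoundedLatticeHom

theorem Finset.exists_superset_card_eq_disjoint {J : Type*} [Infinite J] [DecidableEq J]
    {s t : Finset J} (hst : Disjoint s t) {k : ℕ} (hs : s.card ≤ k) :
    ∃ w : Finset J, s ⊆ w ∧ w.card = k ∧ Disjoint w t := by
  obtain ⟨u, hu, hcard⟩ := Infinite.exists_superset_card_eq (s ∪ t) (k + t.card)
    (by rw [Finset.card_union_of_disjoint hst]; omega)
  refine ⟨u \ t, ?_, ?_, Finset.sdiff_disjoint⟩
  · exact Finset.subset_sdiff.2 ⟨Finset.union_subset_left hu, hst⟩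
  · rw [Finset.card_sdiff_of_subset (Finset.union_subset_right hu), hcard]
    omega

theorem exists_boundedLatticeHom_true_on_false_on {J B : Type*} [BooleanAlgebra B] [Infinite J]
    {k : ℕ} {y : J → B}
    (hy : ∀ w : Finset J, w.card = k →
      ∃ f : BoundedLatticeHom B Bool, ∀ j, f (y j) = true ↔ j ∈ w)
    {s t : Finset J} (hst : Disjoint s t) (hs : s.card ≤ k) :
    ∃ f : BoundedLatticeHom B Bool, (∀ j ∈ s, f (y j) = true) ∧ ∀ j ∈ t, f (y j) = false := by
  classical
  obtain ⟨w, hsw, hw, hwt⟩ := Finset.exists_superset_card_eq_disjoint hst hs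
  obtain ⟨f, hf⟩ := hy w hw
  refine ⟨f, fun j hj => (hf j).2 (hsw hj), fun j hj => ?_⟩
  rw [Bool.eq_false_iff, Ne, hf j]
  exact Finset.disjoint_right.1 hwt hj

/-- If `⟨y_j : j < μ⟩` is a sequence in `B` such that for every `k`-element
subset `w` of `μ` there is an ultrafilter `D` on `B` (here: a bounded lattice
homomorphism `B → Bool`) with `y_j ∈ D ↔ j ∈ w`, then
`⟨(y_j, -y_j) : j < μ⟩` is a `(2k+1)`-independent family in `B × B`;
in particular `ind⁺_{2k+1}(B × B) > μ`. -/
theorem stmt13 {B : Type u} [BooleanAlgebra B] (k : ℕ) (hk : 1 ≤ k)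
    (μ : Cardinal.{u}) (hμ : ℵ₀ ≤ μ) (y : μ.ord.ToType → B)
    (hy : ∀ w : Finset μ.ord.ToType, w.card = k →
      ∃ f : BoundedLatticeHom B Bool, ∀ j, f (y j) = true ↔ j ∈ w) :
    NIndepFam (2 * k + 1) (fun j : μ.ord.ToType => ((y j, (y j)ᶜ) : B × B)) := by
  have : Infinite μ.ord.ToType := by rwa [Cardinal.infinite_iff, Cardinal.mk_ord_toType]
  refine ⟨fun j j' hjj' => ?_, fun s t hst hcard => ?_⟩
  · by_contra hne
    have hyy : y j = y j' := congrArg Prod.fst hjj'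
    obtain ⟨f, hj, hj'⟩ := exists_boundedLatticeHom_true_on_false_on hy
      (Finset.disjoint_singleton.2 hne) (by simpa using hk)
    simp only [Finset.mem_singleton, forall_eq] at hj hj'
    simp [hyy, hj'] at hj
  rcases le_or_gt s.card k with hs_le | hs_gt
  · obtain ⟨f, hs, ht⟩ := exists_boundedLatticeHom_true_on_false_on hy hst hs_le
    exact (f.comp BoundedLatticeHom.fst).finset_inf_inf_compl_ne_bot _ (by simpa using hs)
      (by simpa using ht)
  · obtain ⟨f, ht, hs⟩ := exists_boundedLatticeHom_true_on_false_on hy hst.symm (by omega)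
    exact (f.comp BoundedLatticeHom.snd).finset_inf_inf_compl_ne_bot _
      (by simpa [map_compl'] using hs) (by simpa [map_compl'] using ht)
end

section
/- Let D be a proper filter on [λ]^k (the k-element subsets of λ). Then there exists a non-decreasing sequence ⟨α_0,…,α_{k-1}⟩ of ordinals ≤ λ such that: (a) the set {w ∈ [λ]^k : for each ℓ < k, the ℓ-th member of w (in increasing order) is < α_ℓ} is ≠ ∅ mod D; and (b) whenever α'_ℓ ≤ α_ℓ for all ℓ < k and α'_n < α_n for some n < k, the set {w ∈ [λ]^k : for each ℓ < k the ℓ-th member of w is < α'_ℓ} is = ∅ mod D (its complement is in D). -/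
open Cardinal

/-- Let `D` be a proper filter on `[λ]^k`. Then there is a non-decreasing
sequence `⟨α_0,…,α_{k-1}⟩` of ordinals `≤ λ` (elements of `WithTop` of the
order of type `λ`, with `⊤` playing the role of `λ`) such that:
(a) the set of `w ∈ [λ]^k` whose `ℓ`-th member is `< α_ℓ` for each `ℓ` is
`≠ ∅ mod D` (its complement is not in `D`), and
(b) for every pointwise smaller sequence `α'` (with strict inequality at some
coordinate) the corresponding set is `= ∅ mod D` (its complement is in `D`). -/
theorem stmt15 (lam : Cardinal.{u}) (k : ℕ)
    (D : Filter {w : Finset lam.ord.ToType // w.card = k}) [D.NeBot] :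
    ∃ α : Fin k → WithTop lam.ord.ToType, Monotone α ∧
      ({w : {w : Finset lam.ord.ToType // w.card = k} |
          ∀ ℓ : Fin k, ((w.1.orderIsoOfFin w.2 ℓ : lam.ord.ToType) :
            WithTop lam.ord.ToType) < α ℓ})ᶜ ∉ D ∧
      ∀ α' : Fin k → WithTop lam.ord.ToType,
        (∀ ℓ, α' ℓ ≤ α ℓ) → (∃ n : Fin k, α' n < α n) →
        ({w : {w : Finset lam.ord.ToType // w.card = k} |
            ∀ ℓ : Fin k, ((w.1.orderIsoOfFin w.2 ℓ : lam.ord.ToType) :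
              WithTop lam.ord.ToType) < α' ℓ})ᶜ ∈ D := by
  classical
  let S : (Fin k → WithTop lam.ord.ToType) → Set {w : Finset lam.ord.ToType // w.card = k} :=
    fun α => {w : {w : Finset lam.ord.ToType // w.card = k} |
      ∀ ℓ : Fin k, ((w.1.orderIsoOfFin w.2 ℓ : lam.ord.ToType) : WithTop lam.ord.ToType) < α ℓ}
  let env : (Fin k → WithTop lam.ord.ToType) → (Fin k → WithTop lam.ord.ToType) :=
    fun α ℓ => (Finset.Ici ℓ).inf' ⟨ℓ, Finset.mem_Ici.2 le_rfl⟩ α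
  have env_le : ∀ α, env α ≤ α := fun α ℓ =>
    Finset.inf'_le _ (Finset.mem_Ici.2 le_rfl)
  have env_mono : ∀ α, Monotone (env α) := by
    intro α ℓ m hlm
    apply Finset.le_inf'
    intro j hj
    exact Finset.inf'_le _ (Finset.mem_Ici.2 (le_trans hlm (Finset.mem_Ici.1 hj)))
  have S_env : ∀ α, S (env α) = S α := by
    intro α
    ext w
    constructor
    · intro hw ℓ
      exact lt_of_lt_of_le (hw ℓ) (env_le α ℓ)
    · intro hw ℓ
      show _ < (Finset.Ici ℓ).inf' _ α
      apply (Finset.lt_inf'_iff (H := _)).2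
      intro j hj
      refine lt_of_le_of_lt ?_ (hw j)
      exact_mod_cast (w.1.orderIsoOfFin w.2).monotone (Finset.mem_Ici.1 hj)
  let T : Set (Fin k → WithTop lam.ord.ToType) := {α | (S α)ᶜ ∉ D}
  have hTtop : (fun _ : Fin k => (⊤ : WithTop lam.ord.ToType)) ∈ T := by
    have h1 : S (fun _ => ⊤) = Set.univ := by
      ext w; simp [S, WithTop.coe_lt_top]
    show (S (fun _ => ⊤))ᶜ ∉ D
    rw [h1, Set.compl_univ]
    exact Filter.empty_notMem D
  obtain ⟨α, hαT, hmin⟩ :=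
    (IsWellFounded.wf (α := Fin k → WithTop lam.ord.ToType) (r := (· < ·))).has_min T ⟨_, hTtop⟩
  have hmin' : ∀ β, β ≤ α → β ≠ α → (S β)ᶜ ∈ D := by
    intro β hle hne
    by_contra hmem
    exact hmin β hmem (lt_of_le_of_ne hle hne)
  have henv : env α = α := by
    by_contra hne
    have h2 : (S (env α))ᶜ ∈ D := hmin' _ (env_le α) hne
    rw [S_env] at h2
    exact hαT h2
  refine ⟨α, by rw [← henv]; exact env_mono α, hαT, ?_⟩
  rintro α' hle ⟨n, hn⟩
  have h1 : env α' ≤ α := fun ℓ => le_trans (env_le α' ℓ) (hle ℓ)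
  have h2 : env α' ≠ α := by
    intro h
    have h3 : env α' n ≤ α' n := env_le α' n
    rw [h] at h3
    exact absurd (lt_of_le_of_lt h3 hn) (lt_irrefl _)
  have h4 := hmin' _ h1 h2
  rwa [S_env] at h4
end

section
/- Let τ(x_0,…,x_{k-1}) be a Boolean term and D a κ-complete filter on [λ]^k. If ⟨B_ζ : ζ < θ⟩ is a family of fewer than κ Boolean algebras each having the (D,τ)-dependence property, then any reduced product ∏_{ζ<θ} B_ζ / E (for a filter E on θ), in particular the full product and any ultraproduct, has the (D,τ)-dependence property. -/
/-!
Given `a : λ → ∏ B_ζ`, each coordinate sequence `i ↦ a i ζ` yields a `D`-large set `A_ζ` on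
which `τ` vanishes in `B_ζ`; since `D` is `κ`-complete and `θ < κ`, the intersection of the
`A_ζ` is still in `D`, and on it `τ` vanishes in every coordinate, hence already in the full
product and a fortiori modulo any filter on `θ`.
-/

open Cardinal

/-- Boolean terms in `k` variables. -/
inductive BTerm (k : ℕ) : Type where
  | var : Fin k → BTerm k
  | bot : BTerm k
  | top : BTerm k
  | inf : BTerm k → BTerm k → BTerm k
  | sup : BTerm k → BTerm k → BTerm k
  | compl : BTerm k → BTerm k

/-- Evaluation of a Boolean term at an assignment of the variables. -/
def BTerm.eval {k : ℕ} {A : Type u} [BooleanAlgebra A] (v : Fin k → A) :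
    BTerm k → A
  | .var i => v i
  | .bot => ⊥
  | .top => ⊤
  | .inf a b => a.eval v ⊓ b.eval v
  | .sup a b => a.eval v ⊔ b.eval v
  | .compl a => (a.eval v)ᶜ

/-- A filter is `κ`-complete: closed under intersections of fewer than `κ` of
its members. -/
def KappaComplete {E : Type u} (D : Filter E) (κ : Cardinal.{u}) : Prop :=
  ∀ S : Set (Set E), (∀ s ∈ S, s ∈ D) → #S < κ → ⋂₀ S ∈ D

/-- `B` has the `(D,τ)`-dependence property: for every `λ`-sequence
`⟨a_i : i < λ⟩` in `B` there is `A ∈ D` such that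
`τ(a_{α_0},…,a_{α_{k-1}}) = 0` for every `{α_0 < … < α_{k-1}} ∈ A`. -/
def DepProp {O : Type u} [LinearOrder O] {k : ℕ}
    (D : Filter {w : Finset O // w.card = k}) (τ : BTerm k)
    (B : Type v) [BooleanAlgebra B] : Prop :=
  ∀ a : O → B, ∃ A ∈ D, ∀ w ∈ A,
    BTerm.eval (fun ℓ => a ((Subtype.val w).orderIsoOfFin w.2 ℓ)) τ = ⊥

theorem BTerm.eval_pi_apply {k : ℕ} {ι : Type*} {B : ι → Type*}
    [∀ i, BooleanAlgebra (B i)] (v : Fin k → ∀ i, B i) (τ : BTerm k) (i : ι) :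
    τ.eval v i = τ.eval (fun ℓ => v ℓ i) := by
  induction τ with
  | var => rfl
  | bot => rfl
  | top => rfl
  | inf _ _ ih₁ ih₂ => simp only [BTerm.eval, Pi.inf_apply, ih₁, ih₂]
  | sup _ _ ih₁ ih₂ => simp only [BTerm.eval, Pi.sup_apply, ih₁, ih₂]
  | compl _ ih => simp only [BTerm.eval, Pi.compl_apply, ih]

theorem KappaComplete.iInter_mem {E : Type u} {D : Filter E} {κ : Cardinal.{u}}
    (hD : KappaComplete D κ) {ι : Type u} (hι : #ι < κ) {s : ι → Set E}
    (hs : ∀ i, s i ∈ D) : ⋂ i, s i ∈ D := by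
  rw [← Set.sInter_range]
  refine hD _ ?_ (Cardinal.mk_range_le.trans_lt hι)
  rintro _ ⟨i, rfl⟩
  exact hs i

theorem DepProp.pi {O : Type u} [LinearOrder O] {k : ℕ}
    {D : Filter {w : Finset O // w.card = k}} {τ : BTerm k} {κ : Cardinal.{u}}
    (hD : KappaComplete D κ) {θ : Type u} (hθ : #θ < κ) {B : θ → Type v}
    [∀ ζ, BooleanAlgebra (B ζ)] (hdep : ∀ ζ, DepProp D τ (B ζ)) :
    DepProp D τ (∀ ζ, B ζ) := by
  intro a
  choose A hAD hA using fun ζ => hdep ζ (fun i => a i ζ)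
  refine ⟨⋂ ζ, A ζ, hD.iInter_mem hθ hAD, fun w hw => funext fun ζ => ?_⟩
  rw [BTerm.eval_pi_apply]
  exact hA ζ w (Set.mem_iInter.mp hw ζ)

/-- If `τ` is a Boolean term, `D` a `κ`-complete filter on `[λ]^k`, and
`⟨B_ζ : ζ < θ⟩` (with `θ < κ`) are Boolean algebras each having the
`(D,τ)`-dependence property, then any reduced product `∏_ζ B_ζ / F` has the
`(D,τ)`-dependence property (stated via representatives: a Boolean
combination is `0` in the reduced product iff it is `0` on an `F`-large set
of coordinates). -/
theorem stmt16 (lam κ : Cardinal.{u}) (k : ℕ) (τ : BTerm k)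
    (D : Filter {w : Finset lam.ord.ToType // w.card = k})
    (hD : KappaComplete D κ)
    {θ : Type u} (hθ : #θ < κ) (B : θ → Type u) [∀ ζ, BooleanAlgebra (B ζ)]
    (hdep : ∀ ζ, DepProp D τ (B ζ)) (F : Filter θ) :
    ∀ a : lam.ord.ToType → (∀ ζ, B ζ), ∃ A ∈ D, ∀ w ∈ A,
      {ζ | BTerm.eval
        (fun ℓ => a ((Subtype.val w).orderIsoOfFin w.2 ℓ) ζ) τ = ⊥} ∈ F := by
  intro a
  obtain ⟨A, hAD, hA⟩ := DepProp.pi hD hθ hdep a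
  refine ⟨A, hAD, fun w hw => Filter.univ_mem' fun ζ => ?_⟩
  show _ = ⊥
  rw [← BTerm.eval_pi_apply, hA w hw, Pi.bot_apply]
end
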